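/- arXiv:1904.06630 — 8 statements merged into one kernel-verified Lean document; each statement's English description precedes it below -/
import Mathlib

section
/- Let P be a poset on [p], ρ : P → ℤ a restriction map, and i,j an incomparable pair in P with i < j. Let P₁ be the transitive closure of P with the added relation i ≺ j, and P₂ the transitive closure of P with the added relation j ≺ i. Then the set of (P,ρ)-partitions is the disjoint union of the set of (P₁,ρ)-partitions and the set of (P₂,ρ)-partitions. -/
open MvPolynomial Finset

/-- A `(P,ρ)`-partition for a poset (relation `r`) on `[p]` with restriction `ρ`. -/
def IsRP (p : ℕ) (r : Fin p → Fin p → Prop) (ρ : Fin p → ℤ) (f : Fin p → ℕ) : Prop :=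
  (∀ i, 1 ≤ f i) ∧ (∀ i j, r i j → f i ≤ f j) ∧
  (∀ i j, r i j → (j : ℕ) < (i : ℕ) → f i < f j) ∧ (∀ i, (f i : ℤ) ≤ ρ i)

/-- Generating polynomial of `(P,ρ)`-partitions. -/
noncomputable def genRP (p : ℕ) (r : Fin p → Fin p → Prop) (ρ : Fin p → ℤ) :
    MvPolynomial ℕ ℤ :=
  ∑ᶠ f ∈ {f : Fin p → ℕ | IsRP p r ρ f}, ∏ i : Fin p, X (f i)

/-- Maximum descent distance `δ(i,j)`. -/
noncomputable def delta (p : ℕ) (r : Fin p → Fin p → Prop) (i j : Fin p) : ℕ :=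
  sSup {k | ∃ c : ℕ → Fin p, c 0 = i ∧ c k = j ∧
    ∀ s, s < k → r (c s) (c (s+1)) ∧ ((c (s+1) : ℕ) < (c s : ℕ))}

/-- The maximal `P`-increasing map `ρ̂`. -/
noncomputable def rhohat (p : ℕ) (r : Fin p → Fin p → Prop) (ρ : Fin p → ℤ) (i : Fin p) : ℤ :=
  sInf {y | ∃ x, r i x ∧ y = ρ x - (delta p r i x : ℤ)}

/-- Transitive closure of `r` together with the added relation `i ≺ j`. -/
def addRel (p : ℕ) (r : Fin p → Fin p → Prop) (i j : Fin p) : Fin p → Fin p → Prop :=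
  Relation.TransGen (fun a b => r a b ∨ (a = i ∧ b = j))

/-- `l` is a linear extension of `r`. -/
def LinExt (p : ℕ) (r l : Fin p → Fin p → Prop) : Prop :=
  IsLinearOrder (Fin p) l ∧ ∀ i j, r i j → l i j

/-- Cover relation. -/
def Covers (p : ℕ) (r : Fin p → Fin p → Prop) (i j : Fin p) : Prop :=
  r i j ∧ i ≠ j ∧ ∀ k, r i k → r k j → k = i ∨ k = j

/-- `ρ` is a `P`-flag. -/
def IsFlag (p : ℕ) (r : Fin p → Fin p → Prop) (ρ : Fin p → ℤ) : Prop :=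
  (∀ i, 0 < ρ i) ∧
  ∀ i j, Covers p r i j → (((i : ℕ) < (j : ℕ) → ρ i = ρ j) ∧ ((j : ℕ) < (i : ℕ) → ρ i ≤ ρ j))

/-- The pair `(P,ρ)` is well-labelled. -/
def WellLabelled (p : ℕ) (r : Fin p → Fin p → Prop) (ρ : Fin p → ℤ) : Prop :=
  (∀ i j, Covers p r i j →
    (((i : ℕ) < (j : ℕ) → ρ j ≤ ρ i) ∧ ((j : ℕ) < (i : ℕ) → ρ i ≤ ρ j))) ∧
  ∀ i j, ¬ r i j → ¬ r j i → (i : ℕ) < (j : ℕ) → ρ j ≤ ρ i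

/- ## Positional (word) versions for linear orders.
A linear order on `[p]` is recorded by its word `W : ℕ → ℕ`, where `W s` is the
(integer) label at position `s` (positions `0,…,p-1` in increasing order of `L`). -/

/-- `W` is a word recording a linear order on `[p]`. -/
def IsWord (p : ℕ) (W : ℕ → ℕ) : Prop :=
  (∀ s, s < p → W s < p) ∧ Set.InjOn W (Set.Iio p)

/-- Maximum descent distance between positions `s ≤ t` of the word `W`. -/
noncomputable def deltaP (W : ℕ → ℕ) (s t : ℕ) : ℕ :=
  sSup {k | ∃ c : ℕ → ℕ, c 0 = s ∧ c k = t ∧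
    ∀ u, u < k → c u < c (u+1) ∧ W (c (u+1)) < W (c u)}

/-- `ρ̂` at position `s` for the linear order with word `W` and restrictions `R` (by position). -/
noncomputable def rhohatP (p : ℕ) (W : ℕ → ℕ) (R : ℕ → ℤ) (s : ℕ) : ℤ :=
  sInf {y | ∃ t, s ≤ t ∧ t < p ∧ y = R t - (deltaP W s t : ℤ)}

/-- First position of the maximal descent-free run containing position `t`. -/
noncomputable def chainStartP (W : ℕ → ℕ) (t : ℕ) : ℕ :=
  sInf {s | s ≤ t ∧ ∀ u, s ≤ u → u < t → W u < W (u + 1)}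

/-- The reduced weak descent composition `rdes(L,ρ)` (0-indexed: part `m` is the part
of the composition at position `m+1`). -/
noncomputable def rdesP (p : ℕ) (W : ℕ → ℕ) (R : ℕ → ℤ) : ℕ → ℕ := fun m =>
  ((Finset.range p).filter (fun t => rhohatP p W R (chainStartP W t) = (m : ℤ) + 1)).card

/-- The weak descent composition `des(L,ρ)` (0-indexed). -/
noncomputable def desP (p : ℕ) (W : ℕ → ℕ) (R : ℕ → ℤ) : ℕ → ℕ := fun m =>
  ((Finset.range p).filter (fun t => rhohatP p W R t = (m : ℤ) + 1)).card

/-- An `(L,ρ)`-partition recorded by positions: `f s` is the value at position `s`. -/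
def IsLinPartP (p : ℕ) (W : ℕ → ℕ) (R : ℕ → ℤ) (f : ℕ → ℕ) : Prop :=
  (∀ s, s < p → 1 ≤ f s ∧ (f s : ℤ) ≤ R s) ∧
  (∀ s, s + 1 < p → f s ≤ f (s + 1) ∧ (W (s + 1) < W s → f s < f (s + 1))) ∧
  (∀ s, p ≤ s → f s = 0)

/-- Generating polynomial of `(L,ρ)`-partitions for a linear order recorded by a word. -/
noncomputable def genLinP (p : ℕ) (W : ℕ → ℕ) (R : ℕ → ℤ) : MvPolynomial ℕ ℤ :=
  ∑ᶠ f ∈ {f : ℕ → ℕ | IsLinPartP p W R f}, ∏ s ∈ Finset.range p, X (f s)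

/-- Dominance order on weak compositions: `b ⊵ a`. -/
def Dominates (b a : ℕ → ℕ) : Prop :=
  ∀ k, ∑ m ∈ Finset.range k, a m ≤ ∑ m ∈ Finset.range k, b m

/-- `flat(b)` refines `flat(a)`, for weak compositions of length `n`. -/
def FlatRefines (n : ℕ) (b a : ℕ → ℕ) : Prop :=
  (∑ m ∈ Finset.range n, b m = ∑ m ∈ Finset.range n, a m) ∧
  ∀ k, k ≤ n → ∃ k', k' ≤ n ∧ ∑ m ∈ Finset.range k', b m = ∑ m ∈ Finset.range k, a m

/-- The fundamental slide polynomial of a weak composition `a` of length `n`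
(0-indexed: `a m` is the exponent of `x_{m+1}`). -/
noncomputable def slide (n : ℕ) (a : ℕ → ℕ) : MvPolynomial ℕ ℤ :=
  ∑ᶠ b ∈ {b : ℕ → ℕ | (∀ m, n ≤ m → b m = 0) ∧ Dominates b a ∧ FlatRefines n b a},
    ∏ m ∈ Finset.range n, X (m + 1) ^ b m

/-- The fundamental quasisymmetric polynomial `F_{flat(a)}(x₁,…,x_n)`. -/
noncomputable def fundQS (n : ℕ) (a : ℕ → ℕ) : MvPolynomial ℕ ℤ :=
  ∑ᶠ b ∈ {b : ℕ → ℕ | (∀ m, n ≤ m → b m = 0) ∧ FlatRefines n b a},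
    ∏ m ∈ Finset.range n, X (m + 1) ^ b m

/-- The word of the linear extension given by a permutation `w`
(position `s` carries label `w s`). -/
def wordOf (p : ℕ) (w : Equiv.Perm (Fin p)) : ℕ → ℕ := fun s =>
  if h : s < p then (w ⟨s, h⟩ : ℕ) else s

/-- The restrictions by position for the linear extension given by `w`. -/
def restOf (p : ℕ) (w : Equiv.Perm (Fin p)) (ρ : Fin p → ℤ) : ℕ → ℤ := fun s =>
  if h : s < p then ρ (w ⟨s, h⟩) else 0

/-- Lengths of the maximal weakly increasing runs of a word, i.e. the descent
composition `Des(L)`. -/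
def desCompAux : List ℕ → ℕ → ℕ → List ℕ
  | [], k, _ => [k]
  | x :: xs, k, prev => if x < prev then k :: desCompAux xs 1 x else desCompAux xs (k + 1) x

def desComp : List ℕ → List ℕ
  | [] => []
  | x :: xs => desCompAux xs 1 x

/-- A standard Young tableau: a semistandard tableau using each of `0,…,|μ|-1` exactly once. -/
def IsStandard (μ : YoungDiagram) (T : SemistandardYoungTableau μ) : Prop :=
  ∀ k, k < μ.cells.card → ∃! c : ℕ × ℕ, c ∈ μ.cells ∧ T c.1 c.2 = k

/-- The label of the cell `c` in the standard labelling of the poset `P_λ`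
(rows are labelled bottom-to-top, left-to-right; 0-indexed). -/
def cellLabel (μ : YoungDiagram) (c : ℕ × ℕ) : ℕ :=
  c.2 + ∑ i ∈ Finset.Ioo c.1 (μ.colLen 0), μ.rowLen i

/-- The word of the linear extension `L_T` of `P_λ` determined by a standard tableau `T`. -/
def sytWord (μ : YoungDiagram) (T : SemistandardYoungTableau μ) (t : ℕ) : ℕ :=
  ∑ c ∈ μ.cells.filter (fun c => T c.1 c.2 = t), cellLabel μ c

/-- The flag restrictions, read along the linear extension `L_T`. -/
def sytRest (μ : YoungDiagram) (b : ℕ → ℕ) (T : SemistandardYoungTableau μ) (t : ℕ) : ℤ :=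
  ∑ c ∈ μ.cells.filter (fun c => T c.1 c.2 = t), (b c.1 : ℤ)

/-- The flagged Schur polynomial `s_{λ,b}`: entries of row `i` (0-indexed) are at most `b i`
(entries recorded 1-based, i.e. the Mathlib entry plus one). -/
noncomputable def flaggedSchur (μ : YoungDiagram) (b : ℕ → ℕ) : MvPolynomial ℕ ℤ :=
  ∑ᶠ T ∈ {T : SemistandardYoungTableau μ | ∀ c ∈ μ.cells, T c.1 c.2 + 1 ≤ b c.1},
    ∏ c ∈ μ.cells, X (T c.1 c.2 + 1)


lemma keyQ {α : Type*} (g : α → ℕ) (base : α → α → Prop) (nat : α → ℕ)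
    (hstep : ∀ a b, base a b → g a ≤ g b ∧ (nat b < nat a → g a < g b)) :
    ∀ a b, Relation.TransGen base a b → g a ≤ g b ∧ (nat b < nat a → g a < g b) := by
  intro a b h
  induction h with
  | single h => exact hstep _ _ h
  | tail h hbc ih =>
    obtain ⟨h1, h2⟩ := ih
    obtain ⟨h3, h4⟩ := hstep _ _ hbc
    refine ⟨h1.trans h3, fun hlt => ?_⟩
    rcases lt_or_ge (nat _) (nat _) with hc | hc
    · exact lt_of_le_of_lt h1 (h4 hc)
    · exact lt_of_lt_of_le (h2 (lt_of_le_of_lt hc hlt)) h3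

lemma addRP (p : ℕ) (r : Fin p → Fin p → Prop) (ρ : Fin p → ℤ) (u v : Fin p)
    (f : Fin p → ℕ) (hf : IsRP p r ρ f)
    (huv : f u ≤ f v) (huv' : (v : ℕ) < (u : ℕ) → f u < f v) :
    IsRP p (addRel p r u v) ρ f := by
  obtain ⟨hf1, hf2, hf3, hf4⟩ := hf
  have key := keyQ f (fun a b => r a b ∨ (a = u ∧ b = v))
    (fun a => (a : ℕ)) (by
      rintro a b (h | ⟨rfl, rfl⟩)
      · exact ⟨hf2 _ _ h, hf3 _ _ h⟩
      · exact ⟨huv, huv'⟩)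
  exact ⟨hf1, fun a b h => (key a b h).1, fun a b h hlt => (key a b h).2 hlt, hf4⟩

lemma unRP (p : ℕ) (r : Fin p → Fin p → Prop) (ρ : Fin p → ℤ) (u v : Fin p)
    (f : Fin p → ℕ) (hf : IsRP p (addRel p r u v) ρ f) : IsRP p r ρ f := by
  obtain ⟨hf1, hf2, hf3, hf4⟩ := hf
  refine ⟨hf1, fun a b h => hf2 _ _ (Relation.TransGen.single (Or.inl h)),
    fun a b h => hf3 _ _ (Relation.TransGen.single (Or.inl h)), hf4⟩

lemma edgeRP (p : ℕ) (r : Fin p → Fin p → Prop) (ρ : Fin p → ℤ) (u v : Fin p)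
    (f : Fin p → ℕ) (hf : IsRP p (addRel p r u v) ρ f) : f u ≤ f v :=
  hf.2.1 _ _ (Relation.TransGen.single (Or.inr ⟨rfl, rfl⟩))

theorem stmt1 (p : ℕ) (r : Fin p → Fin p → Prop) [IsPartialOrder (Fin p) r]
    (ρ : Fin p → ℤ) (i j : Fin p) (h1 : ¬ r i j) (h2 : ¬ r j i) (hij : (i : ℕ) < (j : ℕ)) :
    {f : Fin p → ℕ | IsRP p r ρ f} =
      {f : Fin p → ℕ | IsRP p (addRel p r i j) ρ f} ∪
        {f : Fin p → ℕ | IsRP p (addRel p r j i) ρ f} ∧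
    Disjoint {f : Fin p → ℕ | IsRP p (addRel p r i j) ρ f}
      {f : Fin p → ℕ | IsRP p (addRel p r j i) ρ f} := by
  constructor
  · ext f
    simp only [Set.mem_setOf_eq, Set.mem_union]
    constructor
    · intro hf
      rcases le_or_gt (f i) (f j) with h | h
      · exact Or.inl (addRP p r ρ i j f hf h (fun hc => absurd hij (not_lt.2 hc.le)))
      · exact Or.inr (addRP p r ρ j i f hf h.le (fun _ => h))
    · rintro (hf | hf)
      · exact unRP p r ρ i j f hf
      · exact unRP p r ρ j i f hf
  · rw [Set.disjoint_left]
    intro f hf1 hf2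
    have h1 : f i ≤ f j := edgeRP p r ρ i j f hf1
    have h2 : f j < f i := hf2.2.2.1 _ _ (Relation.TransGen.single (Or.inr ⟨rfl, rfl⟩)) hij
    exact absurd h1 (not_le.2 h2)
end

section
/- Let P be a poset on [p] and ρ : P → ℤ a restriction map. Then the set of (P,ρ)-partitions equals the disjoint union over all linear extensions L of P of the sets of (L,ρ)-partitions. (Fundamental Theorem of (P,ρ)-partitions.) -/
open MvPolynomial Finset

/-- The canonical linear order determined by an `f`. -/
def canonLin (p : ℕ) (f : Fin p → ℕ) : Fin p → Fin p → Prop :=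
  fun i j => f i < f j ∨ (f i = f j ∧ i ≤ j)

lemma canonLin_isLinearOrder (p : ℕ) (f : Fin p → ℕ) :
    IsLinearOrder (Fin p) (canonLin p f) where
  refl a := Or.inr ⟨rfl, le_refl a⟩
  trans a b c hab hbc := by
    rcases hab with h1 | ⟨h1, h1'⟩ <;> rcases hbc with h2 | ⟨h2, h2'⟩
    · exact Or.inl (h1.trans h2)
    · exact Or.inl (h2 ▸ h1)
    · exact Or.inl (h1 ▸ h2)
    · exact Or.inr ⟨h1.trans h2, h1'.trans h2'⟩
  antisymm a b hab hba := by
    rcases hab with h1 | ⟨h1, h1'⟩ <;> rcases hba with h2 | ⟨h2, h2'⟩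
    · exact absurd (h1.trans h2) (lt_irrefl _)
    · exact absurd h1 (h2 ▸ lt_irrefl _)
    · exact absurd h2 (h1 ▸ lt_irrefl _)
    · exact le_antisymm h1' h2'
  total a b := by
    rcases lt_trichotomy (f a) (f b) with h | h | h
    · exact Or.inl (Or.inl h)
    · rcases le_total a b with h' | h'
      · exact Or.inl (Or.inr ⟨h, h'⟩)
      · exact Or.inr (Or.inr ⟨h.symm, h'⟩)
    · exact Or.inr (Or.inl h)

/-- For any linear order `l`, membership in `IsRP` forces `l = canonLin`. -/
lemma lin_eq_canon (p : ℕ) (l : Fin p → Fin p → Prop) (hl : IsLinearOrder (Fin p) l)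
    (ρ : Fin p → ℤ) (f : Fin p → ℕ) (hf : IsRP p l ρ f) (i j : Fin p) :
    l i j ↔ canonLin p f i j := by
  obtain ⟨h1, h2, h3, h4⟩ := hf
  constructor
  · intro h
    rcases lt_or_eq_of_le (h2 i j h) with hlt | heq
    · exact Or.inl hlt
    · refine Or.inr ⟨heq, ?_⟩
      by_contra hij
      push_neg at hij
      have : (j : ℕ) < (i : ℕ) := hij
      exact absurd (h3 i j h this) (heq ▸ lt_irrefl _)
  · rintro (hlt | ⟨heq, hle⟩)
    · rcases hl.2.1 i j with h | h
      · exact h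
      · exact absurd (h2 j i h) (not_le.mpr hlt)
    · rcases eq_or_lt_of_le hle with heq' | hlt'
      · exact heq' ▸ hl.1.1.1.1 i
      · rcases hl.2.1 i j with h | h
        · exact h
        · have : (i : ℕ) < (j : ℕ) := hlt'
          exact absurd (h3 j i h this) (heq ▸ lt_irrefl _)

theorem stmt2 (p : ℕ) (r : Fin p → Fin p → Prop) [IsPartialOrder (Fin p) r]
    (ρ : Fin p → ℤ) :
    {f : Fin p → ℕ | IsRP p r ρ f} =
      ⋃ l ∈ {l : Fin p → Fin p → Prop | LinExt p r l}, {f : Fin p → ℕ | IsRP p l ρ f} ∧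
    {l : Fin p → Fin p → Prop | LinExt p r l}.PairwiseDisjoint
      (fun l => {f : Fin p → ℕ | IsRP p l ρ f}) := by
  constructor
  · ext f
    simp only [Set.mem_setOf_eq, Set.mem_iUnion, exists_prop]
    constructor
    · intro hf
      obtain ⟨h1, h2, h3, h4⟩ := hf
      refine ⟨canonLin p f, ⟨canonLin_isLinearOrder p f, ?_⟩, h1, ?_, ?_, h4⟩
      · intro i j hij
        rcases lt_or_eq_of_le (h2 i j hij) with hlt | heq
        · exact Or.inl hlt
        · refine Or.inr ⟨heq, ?_⟩
          by_contra hle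
          push_neg at hle
          exact absurd (h3 i j hij hle) (heq ▸ lt_irrefl _)
      · rintro i j (hlt | ⟨heq, _⟩)
        · exact le_of_lt hlt
        · exact le_of_eq heq
      · rintro i j (hlt | ⟨heq, hle⟩) hji
        · exact hlt
        · exact absurd (Fin.le_def.mp hle) (not_le.mpr hji)
    · rintro ⟨l, ⟨hlin, hext⟩, h1, h2, h3, h4⟩
      exact ⟨h1, fun i j hij => h2 i j (hext i j hij),
        fun i j hij => h3 i j (hext i j hij), h4⟩
  · intro l1 hl1 l2 hl2 hne
    rw [Function.onFun, Set.disjoint_left]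
    intro f hf1 hf2
    apply hne
    funext i j
    have e1 := lin_eq_canon p l1 hl1.1 ρ f hf1 i j
    have e2 := lin_eq_canon p l2 hl2.1 ρ f hf2 i j
    exact propext (e1.trans e2.symm)
end

section
/- For every weak composition a of length n, there exist a linear order L on [p] (p = |a|, the sum of the parts) and a restriction map ρ : L → ℕ such that the generating polynomial of (L,ρ)-partitions equals the fundamental slide polynomial 𝔉_a. -/
open MvPolynomial Finset

namespace Stmt7Aux

/-- Partial sums of a weak composition. -/
def T (b : ℕ → ℕ) (k : ℕ) : ℕ := ∑ m ∈ Finset.range k, b m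

lemma T_mono (b : ℕ → ℕ) {k k' : ℕ} (h : k ≤ k') : T b k ≤ T b k' :=
  Finset.sum_le_sum_of_subset (Finset.range_subset_range.2 h)

lemma T_succ (b : ℕ → ℕ) (k : ℕ) : T b (k + 1) = T b k + b k := Finset.sum_range_succ b k

lemma T_stab {n : ℕ} {b : ℕ → ℕ} (hb : ∀ m, n ≤ m → b m = 0) {k : ℕ} (h : n ≤ k) :
    T b k = T b n := by
  have h0 : ∑ m ∈ Finset.Ico n k, b m = 0 :=
    Finset.sum_eq_zero fun m hm => hb m (Finset.mem_Ico.1 hm).1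
  have h1 := Finset.sum_range_add_sum_Ico b h
  unfold T
  omega

lemma T_le {n : ℕ} {b : ℕ → ℕ} (hb : ∀ m, n ≤ m → b m = 0) (k : ℕ) : T b k ≤ T b n := by
  rcases le_total k n with h | h
  · exact T_mono b h
  · exact le_of_eq (T_stab hb h)

/-- `Psi b s` : the index of the block of the partial-sum decomposition of `b`
containing position `s` (1-based). -/
noncomputable def Psi (b : ℕ → ℕ) (s : ℕ) : ℕ := sInf {j | s < T b j}

lemma psi_le {b : ℕ → ℕ} {s k : ℕ} (h : s < T b k) : Psi b s ≤ k := Nat.sInf_le h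

lemma psi_spec {b : ℕ → ℕ} {N s : ℕ} (h : s < T b N) :
    1 ≤ Psi b s ∧ Psi b s ≤ N ∧ T b (Psi b s - 1) ≤ s ∧ s < T b (Psi b s) := by
  have hne : {j | s < T b j}.Nonempty := ⟨N, h⟩
  have hmem : s < T b (Psi b s) := Nat.sInf_mem hne
  have h1 : 1 ≤ Psi b s := by
    by_contra h0
    have hz : Psi b s = 0 := by omega
    rw [hz] at hmem
    simp [T] at hmem
  have h3 : T b (Psi b s - 1) ≤ s := by
    by_contra hc
    push_neg at hc
    have h4 : Psi b s ≤ Psi b s - 1 := Nat.sInf_le hc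
    omega
  exact ⟨h1, psi_le h, h3, hmem⟩

lemma psi_zero {b : ℕ → ℕ} {s : ℕ} (h : ∀ j, T b j ≤ s) : Psi b s = 0 := by
  have he : {j | s < T b j} = ∅ :=
    Set.eq_empty_iff_forall_notMem.2 fun j hj => absurd hj (not_lt.2 (h j))
  rw [Psi, he, Nat.sInf_empty]

lemma psi_mono {b : ℕ → ℕ} {N s s' : ℕ} (hss : s ≤ s') (h : s' < T b N) :
    Psi b s ≤ Psi b s' :=
  psi_le (lt_of_le_of_lt hss (psi_spec h).2.2.2)

/-- The word of the canonical linear order attached to `a`. -/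
noncomputable def Wrd (n : ℕ) (a : ℕ → ℕ) (s : ℕ) : ℕ :=
  if s < T a n then (T a n - T a (Psi a s)) + (s - T a (Psi a s - 1)) else s

lemma W_lt_p {n : ℕ} {a : ℕ → ℕ} (ha : ∀ m, n ≤ m → a m = 0) {s : ℕ} (hs : s < T a n) :
    Wrd n a s < T a n := by
  obtain ⟨h1, h2, h3, h4⟩ := psi_spec hs
  have h5 : T a (Psi a s) ≤ T a n := T_le ha _
  rw [Wrd, if_pos hs]
  omega

lemma W_block_lt {n : ℕ} {a : ℕ → ℕ} (ha : ∀ m, n ≤ m → a m = 0) {s s' : ℕ}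
    (hs : s < T a n) (hs' : s' < T a n) (h : Psi a s < Psi a s') :
    Wrd n a s' < Wrd n a s := by
  obtain ⟨h1, h2, h3, h4⟩ := psi_spec hs
  obtain ⟨h1', h2', h3', h4'⟩ := psi_spec hs'
  have hA : T a (Psi a s) ≤ T a (Psi a s' - 1) := T_mono a (by omega)
  rw [Wrd, Wrd, if_pos hs, if_pos hs']
  omega

lemma W_same_lt {n : ℕ} {a : ℕ → ℕ} {s s' : ℕ} (hs : s < T a n) (hs' : s' < T a n)
    (hψ : Psi a s = Psi a s') (hss : s < s') : Wrd n a s < Wrd n a s' := by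
  obtain ⟨h1, h2, h3, h4⟩ := psi_spec hs
  rw [Wrd, Wrd, if_pos hs, if_pos hs', ← hψ]
  omega

lemma W_word {n : ℕ} {a : ℕ → ℕ} (ha : ∀ m, n ≤ m → a m = 0) :
    IsWord (T a n) (Wrd n a) := by
  constructor
  · intro s hs; exact W_lt_p ha hs
  · intro s hs s' hs' hW
    simp only [Set.mem_Iio] at hs hs'
    by_contra hne
    rcases Nat.lt_or_ge s s' with h | h
    · rcases Nat.lt_or_ge (Psi a s) (Psi a s') with h2 | h2
      · have := W_block_lt ha hs hs' h2; omega
      · have h3 : Psi a s ≤ Psi a s' := psi_mono (le_of_lt h) hs'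
        have h4 : Psi a s = Psi a s' := le_antisymm h3 h2
        have := W_same_lt hs hs' h4 h; omega
    · have h' : s' < s := by omega
      rcases Nat.lt_or_ge (Psi a s') (Psi a s) with h2 | h2
      · have := W_block_lt ha hs' hs h2; omega
      · have h3 : Psi a s' ≤ Psi a s := psi_mono (le_of_lt h') hs
        have h4 : Psi a s' = Psi a s := le_antisymm h3 h2
        have := W_same_lt hs' hs h4 h'; omega

/-- The weak composition recording the multiplicities of the values of `f`. -/
def Phi (p : ℕ) (f : ℕ → ℕ) : ℕ → ℕ := fun m =>
  ((Finset.range p).filter (fun s => f s = m + 1)).card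

lemma sum_Phi {p : ℕ} {f : ℕ → ℕ} (hf1 : ∀ s, s < p → 1 ≤ f s) (k : ℕ) :
    ∑ m ∈ Finset.range k, Phi p f m = ((Finset.range p).filter (fun s => f s ≤ k)).card := by
  classical
  have hmaps : ∀ x ∈ (Finset.range p).filter (fun s => f s ≤ k),
      f x - 1 ∈ Finset.range k := by
    intro x hx
    simp only [Finset.mem_filter, Finset.mem_range] at hx ⊢
    have := hf1 x hx.1
    omega
  rw [Finset.card_eq_sum_card_fiberwise hmaps]
  refine Finset.sum_congr rfl fun m hm => ?_
  simp only [Finset.mem_range] at hm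
  simp only [Phi]
  rw [Finset.filter_filter]
  congr 1
  apply Finset.filter_congr
  intro x hx
  simp only [Finset.mem_range] at hx
  have := hf1 x hx
  omega

lemma part_mono {p : ℕ} {W : ℕ → ℕ} {R : ℕ → ℤ} {f : ℕ → ℕ} (hf : IsLinPartP p W R f) :
    ∀ d t, t + d < p → f t ≤ f (t + d) := by
  intro d
  induction d with
  | zero => exact fun t _ => le_refl _
  | succ d ih =>
    intro t h
    have h1 : f t ≤ f (t + d) := ih t (by omega)
    have h2 : f (t + d) ≤ f (t + d + 1) := (hf.2.1 (t + d) (by omega)).1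
    exact le_trans h1 h2

lemma part_mono' {p : ℕ} {W : ℕ → ℕ} {R : ℕ → ℤ} {f : ℕ → ℕ} (hf : IsLinPartP p W R f)
    {t t' : ℕ} (h : t ≤ t') (h' : t' < p) : f t ≤ f t' := by
  have h2 := part_mono hf (t' - t) t (by omega)
  have e : t + (t' - t) = t' := by omega
  rwa [e] at h2

lemma fwd_mem {n : ℕ} {a : ℕ → ℕ} (ha : ∀ m, n ≤ m → a m = 0) {f : ℕ → ℕ}
    (hf : IsLinPartP (T a n) (Wrd n a) (fun s => ((Psi a s : ℤ))) f) :
    (∀ m, n ≤ m → Phi (T a n) f m = 0) ∧ Dominates (Phi (T a n) f) a ∧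
      FlatRefines n (Phi (T a n) f) a := by
  classical
  have hf1 : ∀ s, s < T a n → 1 ≤ f s := fun s hs => (hf.1 s hs).1
  have hfρ : ∀ s, s < T a n → f s ≤ Psi a s := fun s hs =>
    Nat.cast_le.mp (hf.1 s hs).2
  have hfn : ∀ s, s < T a n → f s ≤ n := fun s hs =>
    le_trans (hfρ s hs) (psi_spec hs).2.1
  have hfull : ((Finset.range (T a n)).filter (fun s => f s ≤ n)) = Finset.range (T a n) := by
    apply Finset.filter_true_of_mem
    intro s hs
    exact hfn s (Finset.mem_range.1 hs)
  refine ⟨?_, ?_, ?_, ?_⟩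
  · -- vanishing beyond n
    intro m hm
    simp only [Phi]
    rw [Finset.card_eq_zero, Finset.filter_eq_empty_iff]
    intro s hs
    have := hfn s (Finset.mem_range.1 hs)
    omega
  · -- dominance
    intro k
    have hrw := sum_Phi hf1 (p := T a n) (f := f) k
    have hsub : Finset.range (T a k) ⊆ (Finset.range (T a n)).filter (fun s => f s ≤ k) := by
      intro s hsk
      simp only [Finset.mem_range] at hsk
      have hsp : s < T a n := lt_of_lt_of_le hsk (T_le ha k)
      have hψk : Psi a s ≤ k := psi_le hsk
      exact Finset.mem_filter.2 ⟨Finset.mem_range.2 hsp, le_trans (hfρ s hsp) hψk⟩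
    have hcard := Finset.card_le_card hsub
    rw [Finset.card_range] at hcard
    calc ∑ m ∈ Finset.range k, a m = T a k := rfl
    _ ≤ _ := hcard
    _ = ∑ m ∈ Finset.range k, Phi (T a n) f m := hrw.symm
  · -- equal total sums
    rw [sum_Phi hf1 n, hfull, Finset.card_range]
    rfl
  · -- refinement of partial sums
    intro k hk
    have hle : T a k ≤ T a n := T_le ha k
    rcases Nat.eq_zero_or_pos (T a k) with h0 | h0
    · refine ⟨0, Nat.zero_le n, ?_⟩
      simp only [Finset.range_zero, Finset.sum_empty]
      exact h0.symm
    rcases eq_or_lt_of_le hle with hep | hltp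
    · refine ⟨n, le_refl n, ?_⟩
      rw [sum_Phi hf1 n, hfull, Finset.card_range]
      exact hep.symm
    · -- 0 < T a k < T a n
      have hs1 : T a k - 1 < T a n := by omega
      have hss : (T a k - 1) + 1 = T a k := by omega
      set s := T a k - 1 with hsdef
      have hρs : Psi a s ≤ k := psi_le (by omega : s < T a k)
      have hρs1 : k < Psi a (s + 1) := by
        have h4 := (psi_spec (show s + 1 < T a n by omega)).2.2.2
        by_contra hc
        push_neg at hc
        have h5 := T_mono a hc
        omega
      have hdes : Wrd n a (s + 1) < Wrd n a s :=
        W_block_lt ha (by omega) (by omega) (by omega)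
      have hstrict : f s < f (s + 1) := (hf.2.1 s (by omega)).2 hdes
      refine ⟨f s, le_trans (le_trans (hfρ s (by omega)) hρs) hk, ?_⟩
      rw [sum_Phi hf1 (f s)]
      have hfe : (Finset.range (T a n)).filter (fun t => f t ≤ f s) =
          Finset.range (T a k) := by
        ext t
        simp only [Finset.mem_filter, Finset.mem_range]
        constructor
        · rintro ⟨htp, hft⟩
          by_contra hc
          push_neg at hc
          have hge : f (s + 1) ≤ f t := part_mono' hf (by omega) htp
          omega
        · intro htk
          have htp : t < T a n := by omega
          exact ⟨htp, part_mono' hf (by omega : t ≤ s) (by omega)⟩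
      rw [hfe, Finset.card_range]
      rfl

lemma bwd_mem {n : ℕ} {a : ℕ → ℕ} (ha : ∀ m, n ≤ m → a m = 0) {b : ℕ → ℕ}
    (hb0 : ∀ m, n ≤ m → b m = 0) (hdom : Dominates b a) (hfl : FlatRefines n b a) :
    IsLinPartP (T a n) (Wrd n a) (fun s => ((Psi a s : ℤ))) (Psi b) := by
  have hTn : T b n = T a n := hfl.1
  have hTle : ∀ j, T b j ≤ T a n := fun j => hTn ▸ T_le hb0 j
  have hST : ∀ k, T a k ≤ T b k := hdom
  refine ⟨?_, ?_, ?_⟩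
  · intro s hs
    have hsb : s < T b n := by omega
    obtain ⟨h1, h2, h3, h4⟩ := psi_spec hsb
    refine ⟨h1, ?_⟩
    have h5 : s < T b (Psi a s) := lt_of_lt_of_le (psi_spec hs).2.2.2 (hST _)
    have h6 := psi_le h5
    exact Nat.cast_le.mpr h6
  · intro s hs1
    have hsb : s + 1 < T b n := by omega
    refine ⟨psi_mono (Nat.le_succ s) hsb, ?_⟩
    intro hW
    have hsa : s < T a n := by omega
    have hs1a : s + 1 < T a n := hs1
    have hρmono : Psi a s ≤ Psi a (s + 1) := psi_mono (Nat.le_succ s) hs1a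
    have hρlt : Psi a s < Psi a (s + 1) := by
      rcases eq_or_lt_of_le hρmono with he | hl
      · have := W_same_lt hsa hs1a he (Nat.lt_succ_self s); omega
      · exact hl
    obtain ⟨g1, g2, g3, g4⟩ := psi_spec hsa
    obtain ⟨g1', g2', g3', g4'⟩ := psi_spec hs1a
    have hSk : T a (Psi a s) = s + 1 := by
      have h5 : T a (Psi a s) ≤ T a (Psi a (s + 1) - 1) := T_mono a (by omega)
      omega
    obtain ⟨k', hk'n, hk'⟩ := hfl.2 (Psi a s) g2
    have hTk' : T b k' = s + 1 := by
      have : T b k' = T a (Psi a s) := hk'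
      omega
    have hfle : Psi b s ≤ k' := psi_le (by omega : s < T b k')
    have hfgt : k' < Psi b (s + 1) := by
      by_contra hc
      push_neg at hc
      have h5 := T_mono b hc
      have h6 := (psi_spec hsb).2.2.2
      omega
    omega
  · intro s hs
    exact psi_zero fun j => le_trans (hTle j) hs

lemma left_inv {n : ℕ} {a : ℕ → ℕ} (ha : ∀ m, n ≤ m → a m = 0) {f : ℕ → ℕ}
    (hf : IsLinPartP (T a n) (Wrd n a) (fun s => ((Psi a s : ℤ))) f) :
    Psi (Phi (T a n) f) = f := by
  classical
  have hf1 : ∀ s, s < T a n → 1 ≤ f s := fun s hs => (hf.1 s hs).1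
  have hT : ∀ k, T (Phi (T a n) f) k =
      ((Finset.range (T a n)).filter (fun s => f s ≤ k)).card := fun k => sum_Phi hf1 k
  have hTle : ∀ k, T (Phi (T a n) f) k ≤ T a n := by
    intro k
    rw [hT k]
    calc ((Finset.range (T a n)).filter (fun s => f s ≤ k)).card
        ≤ (Finset.range (T a n)).card := Finset.card_filter_le _ _
    _ = T a n := Finset.card_range _
  funext s
  rcases Nat.lt_or_ge s (T a n) with hs | hs
  · have hmem : s < T (Phi (T a n) f) (f s) := by
      rw [hT]
      have hsub : Finset.range (s + 1) ⊆
          (Finset.range (T a n)).filter (fun t => f t ≤ f s) := by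
        intro t ht
        simp only [Finset.mem_range] at ht
        exact Finset.mem_filter.2
          ⟨Finset.mem_range.2 (by omega), part_mono' hf (by omega) hs⟩
      have hc := Finset.card_le_card hsub
      rw [Finset.card_range] at hc
      omega
    have hub : ∀ j, j < f s → ¬ (s < T (Phi (T a n) f) j) := by
      intro j hj
      rw [hT]
      have hsub : (Finset.range (T a n)).filter (fun t => f t ≤ j) ⊆ Finset.range s := by
        intro t ht
        simp only [Finset.mem_filter, Finset.mem_range] at ht
        simp only [Finset.mem_range]
        by_contra hc
        push_neg at hc
        have := part_mono' hf hc ht.1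
        omega
      have hc := Finset.card_le_card hsub
      rw [Finset.card_range] at hc
      omega
    have h1 : Psi (Phi (T a n) f) s ≤ f s := psi_le hmem
    have h2 : f s ≤ Psi (Phi (T a n) f) s := by
      by_contra hc
      push_neg at hc
      have hm : s < T (Phi (T a n) f) (Psi (Phi (T a n) f) s) :=
        Nat.sInf_mem (⟨f s, hmem⟩ : {j | s < T (Phi (T a n) f) j}.Nonempty)
      exact hub _ hc hm
    omega
  · have h0 : Psi (Phi (T a n) f) s = 0 := psi_zero fun j => le_trans (hTle j) hs
    rw [h0, hf.2.2 s hs]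

lemma right_inv {n : ℕ} {a : ℕ → ℕ} (ha : ∀ m, n ≤ m → a m = 0) {b : ℕ → ℕ}
    (hb0 : ∀ m, n ≤ m → b m = 0) (hdom : Dominates b a) (hfl : FlatRefines n b a) :
    Phi (T a n) (Psi b) = b := by
  classical
  have hTn : T b n = T a n := hfl.1
  funext m
  rcases Nat.lt_or_ge m n with hm | hm
  · have heq : (Finset.range (T a n)).filter (fun s => Psi b s = m + 1) =
        Finset.Ico (T b m) (T b (m + 1)) := by
      ext t
      simp only [Finset.mem_filter, Finset.mem_range, Finset.mem_Ico]
      constructor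
      · rintro ⟨htp, hψ⟩
        have htb : t < T b n := by omega
        obtain ⟨h1, h2, h3, h4⟩ := psi_spec htb
        rw [hψ] at h3 h4
        refine ⟨?_, h4⟩
        simpa using h3
      · rintro ⟨h1, h2⟩
        have hle : T b (m + 1) ≤ T b n := T_mono b (by omega)
        have htp : t < T a n := by omega
        have hub : Psi b t ≤ m + 1 := psi_le h2
        have hlb : m + 1 ≤ Psi b t := by
          by_contra hc
          push_neg at hc
          have h4 := (psi_spec (show t < T b n by omega)).2.2.2
          have h5 := T_mono b (show Psi b t ≤ m by omega)
          omega
        exact ⟨htp, by omega⟩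
    simp only [Phi]
    rw [heq, Nat.card_Ico]
    have := T_succ b m
    omega
  · have h0 : b m = 0 := hb0 m hm
    rw [h0]
    simp only [Phi]
    rw [Finset.card_eq_zero, Finset.filter_eq_empty_iff]
    intro t ht
    simp only [Finset.mem_range] at ht
    have h2 := (psi_spec (show t < T b n by omega)).2.1
    omega

lemma prod_Phi {n p : ℕ} {f : ℕ → ℕ} (hf1 : ∀ s, s < p → 1 ≤ f s)
    (hfn : ∀ s, s < p → f s ≤ n) :
    ∏ s ∈ Finset.range p, (X (f s) : MvPolynomial ℕ ℤ) =
      ∏ m ∈ Finset.range n, X (m + 1) ^ Phi p f m := by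
  classical
  rw [← Finset.prod_fiberwise_of_maps_to (g := fun s => f s - 1) (t := Finset.range n)
    (fun x hx => by
      simp only [Finset.mem_range] at hx ⊢
      have := hf1 x hx
      have := hfn x hx
      omega)
    (fun s => (X (f s) : MvPolynomial ℕ ℤ))]
  refine Finset.prod_congr rfl fun m hm => ?_
  have hfilter : (Finset.range p).filter (fun x => f x - 1 = m) =
      (Finset.range p).filter (fun x => f x = m + 1) := by
    apply Finset.filter_congr
    intro x hx
    simp only [Finset.mem_range] at hx
    have := hf1 x hx
    omega
  rw [hfilter]
  calc ∏ x ∈ (Finset.range p).filter (fun x => f x = m + 1), (X (f x) : MvPolynomial ℕ ℤ)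
      = ∏ _x ∈ (Finset.range p).filter (fun x => f x = m + 1),
          (X (m + 1) : MvPolynomial ℕ ℤ) := by
        refine Finset.prod_congr rfl fun x hx => ?_
        simp only [Finset.mem_filter] at hx
        rw [hx.2]
    _ = X (m + 1) ^ Phi p f m := by rw [Finset.prod_const]; rfl

lemma main_eq {n : ℕ} {a : ℕ → ℕ} (ha : ∀ m, n ≤ m → a m = 0) :
    genLinP (T a n) (Wrd n a) (fun s => ((Psi a s : ℤ))) = slide n a := by
  classical
  unfold genLinP slide
  refine finsum_mem_eq_of_bijOn (Phi (T a n))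
    (Set.InvOn.bijOn (f' := Psi) ⟨?_, ?_⟩ ?_ ?_) ?_
  · intro f hf
    exact left_inv ha hf
  · intro b hb
    exact right_inv ha hb.1 hb.2.1 hb.2.2
  · intro f hf
    exact fwd_mem ha hf
  · intro b hb
    exact bwd_mem ha hb.1 hb.2.1 hb.2.2
  · intro f hf
    have hf1 : ∀ s, s < T a n → 1 ≤ f s := fun s hs => (hf.1 s hs).1
    have hfn : ∀ s, s < T a n → f s ≤ n := fun s hs =>
      le_trans (Nat.cast_le.mp (hf.1 s hs).2) (psi_spec hs).2.1
    exact prod_Phi hf1 hfn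

end Stmt7Aux

theorem stmt7 (n : ℕ) (a : ℕ → ℕ) (ha : ∀ m, n ≤ m → a m = 0) :
    ∃ (W : ℕ → ℕ) (ρ : ℕ → ℕ), IsWord (∑ m ∈ Finset.range n, a m) W ∧
      genLinP (∑ m ∈ Finset.range n, a m) W (fun s => (ρ s : ℤ)) = slide n a :=
  ⟨Stmt7Aux.Wrd n a, Stmt7Aux.Psi a, Stmt7Aux.W_word ha, Stmt7Aux.main_eq ha⟩
end

section
/- Let P be a poset on [p] and ρ a P-flag. Then there exists a permutation π of [p] such that: (1) ρ∘π is a π⁻¹(P)-flag; (2) the pair (π⁻¹(P), ρ∘π) is well-labelled; and (3) the sets of (P,ρ)-partitions and (π⁻¹(P), ρ∘π)-partitions give equal generating polynomials. -/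
open MvPolynomial Finset

section Aux

variable {p : ℕ} {r : Fin p → Fin p → Prop} {ρ : Fin p → ℤ}

private lemma flag_mono [IsPartialOrder (Fin p) r] (hflag : IsFlag p r ρ)
    {a b : Fin p} (hab : r a b) (hne : a ≠ b) : ρ a ≤ ρ b := by
  classical
  have htrans : ∀ {x y z : Fin p}, r x y → r y z → r x z :=
    fun h h' => IsTrans.trans _ _ _ h h'
  have hanti : ∀ {x y : Fin p}, r x y → r y x → x = y :=
    fun h h' => Std.Antisymm.antisymm _ _ h h'
  suffices H : ∀ n (a b : Fin p),
      ((Finset.univ.filter fun z => r a z ∧ r z b ∧ z ≠ a ∧ z ≠ b).card = n) →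
      r a b → a ≠ b → ρ a ≤ ρ b from H _ a b rfl hab hne
  intro n
  induction n using Nat.strong_induction_on with
  | _ n ih =>
    intro a b hcard hab hne
    by_cases hemp : ∀ z, r a z → r z b → z = a ∨ z = b
    · rcases lt_trichotomy (a : ℕ) (b : ℕ) with h | h | h
      · exact le_of_eq ((hflag.2 a b ⟨hab, hne, hemp⟩).1 h)
      · exact absurd (Fin.ext h) hne
      · exact (hflag.2 a b ⟨hab, hne, hemp⟩).2 h
    · push_neg at hemp
      obtain ⟨z, haz, hzb, hza, hzb'⟩ := hemp
      have hzmem : z ∈ Finset.univ.filter fun w => r a w ∧ r w b ∧ w ≠ a ∧ w ≠ b := by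
        simp [haz, hzb, hza, hzb']
      have hsub1 : (Finset.univ.filter fun w => r a w ∧ r w z ∧ w ≠ a ∧ w ≠ z) ⊆
          Finset.univ.filter fun w => r a w ∧ r w b ∧ w ≠ a ∧ w ≠ b := by
        intro w hw
        simp only [Finset.mem_filter, Finset.mem_univ, true_and] at hw ⊢
        refine ⟨hw.1, htrans hw.2.1 hzb, hw.2.2.1, ?_⟩
        rintro rfl
        exact hzb' (hanti hzb hw.2.1)
      have hsub2 : (Finset.univ.filter fun w => r z w ∧ r w b ∧ w ≠ z ∧ w ≠ b) ⊆
          Finset.univ.filter fun w => r a w ∧ r w b ∧ w ≠ a ∧ w ≠ b := by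
        intro w hw
        simp only [Finset.mem_filter, Finset.mem_univ, true_and] at hw ⊢
        refine ⟨htrans haz hw.1, hw.2.1, ?_, hw.2.2.2⟩
        rintro rfl
        exact hza (hanti hw.1 haz)
      have hc1 : (Finset.univ.filter fun w => r a w ∧ r w z ∧ w ≠ a ∧ w ≠ z).card < n := by
        rw [← hcard]
        refine Finset.card_lt_card ((Finset.ssubset_iff_of_subset hsub1).2 ⟨z, hzmem, ?_⟩)
        simp
      have hc2 : (Finset.univ.filter fun w => r z w ∧ r w b ∧ w ≠ z ∧ w ≠ b).card < n := by
        rw [← hcard]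
        refine Finset.card_lt_card ((Finset.ssubset_iff_of_subset hsub2).2 ⟨z, hzmem, ?_⟩)
        simp
      exact le_trans (ih _ hc1 a z rfl haz hza.symm) (ih _ hc2 z b rfl hzb hzb')

private lemma flag_strict [IsPartialOrder (Fin p) r] (hflag : IsFlag p r ρ)
    {f : Fin p → ℕ} (hw : ∀ i j, r i j → f i ≤ f j)
    (hs : ∀ i j, r i j → (j : ℕ) < (i : ℕ) → f i < f j)
    {a b : Fin p} (hab : r a b) (hne : a ≠ b) (hρ : ρ a < ρ b) : f a < f b := by
  classical
  have htrans : ∀ {x y z : Fin p}, r x y → r y z → r x z :=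
    fun h h' => IsTrans.trans _ _ _ h h'
  have hanti : ∀ {x y : Fin p}, r x y → r y x → x = y :=
    fun h h' => Std.Antisymm.antisymm _ _ h h'
  suffices H : ∀ n (a b : Fin p),
      ((Finset.univ.filter fun z => r a z ∧ r z b ∧ z ≠ a ∧ z ≠ b).card = n) →
      r a b → a ≠ b → ρ a < ρ b → f a < f b from H _ a b rfl hab hne hρ
  intro n
  induction n using Nat.strong_induction_on with
  | _ n ih =>
    intro a b hcard hab hne hρ
    by_cases hemp : ∀ z, r a z → r z b → z = a ∨ z = b
    · rcases lt_trichotomy (a : ℕ) (b : ℕ) with h | h | h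
      · exact absurd ((hflag.2 a b ⟨hab, hne, hemp⟩).1 h) (ne_of_lt hρ)
      · exact absurd (Fin.ext h) hne
      · exact hs a b hab h
    · push_neg at hemp
      obtain ⟨z, haz, hzb, hza, hzb'⟩ := hemp
      have hzmem : z ∈ Finset.univ.filter fun w => r a w ∧ r w b ∧ w ≠ a ∧ w ≠ b := by
        simp [haz, hzb, hza, hzb']
      have hsub1 : (Finset.univ.filter fun w => r a w ∧ r w z ∧ w ≠ a ∧ w ≠ z) ⊆
          Finset.univ.filter fun w => r a w ∧ r w b ∧ w ≠ a ∧ w ≠ b := by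
        intro w hw
        simp only [Finset.mem_filter, Finset.mem_univ, true_and] at hw ⊢
        refine ⟨hw.1, htrans hw.2.1 hzb, hw.2.2.1, ?_⟩
        rintro rfl
        exact hzb' (hanti hzb hw.2.1)
      have hsub2 : (Finset.univ.filter fun w => r z w ∧ r w b ∧ w ≠ z ∧ w ≠ b) ⊆
          Finset.univ.filter fun w => r a w ∧ r w b ∧ w ≠ a ∧ w ≠ b := by
        intro w hw
        simp only [Finset.mem_filter, Finset.mem_univ, true_and] at hw ⊢
        refine ⟨htrans haz hw.1, hw.2.1, ?_, hw.2.2.2⟩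
        rintro rfl
        exact hza (hanti hw.1 haz)
      have hc1 : (Finset.univ.filter fun w => r a w ∧ r w z ∧ w ≠ a ∧ w ≠ z).card < n := by
        rw [← hcard]
        refine Finset.card_lt_card ((Finset.ssubset_iff_of_subset hsub1).2 ⟨z, hzmem, ?_⟩)
        simp
      have hc2 : (Finset.univ.filter fun w => r z w ∧ r w b ∧ w ≠ z ∧ w ≠ b).card < n := by
        rw [← hcard]
        refine Finset.card_lt_card ((Finset.ssubset_iff_of_subset hsub2).2 ⟨z, hzmem, ?_⟩)
        simp
      by_cases hz : ρ a < ρ z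
      · exact lt_of_lt_of_le (ih _ hc1 a z rfl haz hza.symm hz) (hw z b hzb)
      · have : ρ z < ρ b := lt_of_le_of_lt (not_lt.1 hz) hρ
        exact lt_of_le_of_lt (hw a z haz) (ih _ hc2 z b rfl hzb hzb' this)

end Aux

theorem stmt8 (p : ℕ) (r : Fin p → Fin p → Prop) [IsPartialOrder (Fin p) r]
    (ρ : Fin p → ℤ) (hflag : IsFlag p r ρ) :
    ∃ π : Equiv.Perm (Fin p),
      IsFlag p (fun i j => r (π i) (π j)) (ρ ∘ π) ∧
      WellLabelled p (fun i j => r (π i) (π j)) (ρ ∘ π) ∧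
      genRP p r ρ = genRP p (fun i j => r (π i) (π j)) (ρ ∘ π) := by
  classical
  set key : Fin p → ℤ ×ₗ (Fin p) := fun a => toLex (-ρ a, a) with hkey
  have hinj : Function.Injective key := by
    intro a b h
    have := congrArg (fun x => (ofLex x).2) h
    simpa [hkey] using this
  set π : Equiv.Perm (Fin p) := Tuple.sort key with hπ
  have hmono : StrictMono (key ∘ π) :=
    (Tuple.monotone_sort key).strictMono_of_injective (hinj.comp π.injective)
  have K : ∀ i j : Fin p, (i : ℕ) < (j : ℕ) ↔
      (ρ (π j) < ρ (π i) ∨ (ρ (π i) = ρ (π j) ∧ (π i : ℕ) < (π j : ℕ))) := by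
    intro i j
    rw [← Fin.lt_def, ← hmono.lt_iff_lt]
    show toLex (-ρ (π i), π i) < toLex (-ρ (π j), π j) ↔ _
    rw [Prod.Lex.lt_iff]
    constructor
    · rintro (h | ⟨h1, h2⟩)
      · exact Or.inl (by simp only [ofLex_toLex] at *; omega)
      · exact Or.inr ⟨by simp only [ofLex_toLex] at *; omega, Fin.lt_def.mp h2⟩
    · rintro (h | ⟨h1, h2⟩)
      · exact Or.inl (by simp only [ofLex_toLex] at *; omega)
      · exact Or.inr ⟨by simp only [ofLex_toLex] at *; omega, Fin.lt_def.mpr h2⟩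
  refine ⟨π, ?_, ?_, ?_⟩
  · -- IsFlag
    refine ⟨fun i => hflag.1 (π i), fun i j hcov => ⟨?_, ?_⟩⟩
    · intro hij
      have hne : π i ≠ π j := fun h => hcov.2.1 (π.injective h)
      rcases (K i j).1 hij with h | h
      · exact absurd (flag_mono hflag hcov.1 hne) (not_le.mpr h)
      · exact h.1
    · intro hji
      rcases (K j i).1 hji with h | h
      · exact le_of_lt h
      · exact le_of_eq h.1.symm
  · -- WellLabelled
    constructor
    · intro i j _
      constructor
      · intro hij
        rcases (K i j).1 hij with h | h
        · exact le_of_lt h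
        · exact le_of_eq h.1.symm
      · intro hji
        rcases (K j i).1 hji with h | h
        · exact le_of_lt h
        · exact le_of_eq h.1.symm
    · intro i j _ _ hij
      rcases (K i j).1 hij with h | h
      · exact le_of_lt h
      · exact le_of_eq h.1.symm
  · -- genRP
    have hiff : ∀ f : Fin p → ℕ,
        IsRP p r ρ f ↔ IsRP p (fun i j => r (π i) (π j)) (ρ ∘ π) (f ∘ π) := by
      intro f
      constructor
      · rintro ⟨h1, h2, h3, h4⟩
        refine ⟨fun i => h1 _, fun i j h => h2 _ _ h, ?_, fun i => h4 _⟩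
        intro i j hr hji
        have hne : π i ≠ π j := by
          intro h
          have hij : i = j := π.injective h
          subst hij
          exact lt_irrefl _ hji
        rcases (K j i).1 hji with h | h
        · exact flag_strict hflag h2 h3 hr hne h
        · exact h3 _ _ hr h.2
      · rintro ⟨h1, h2, h3, h4⟩
        refine ⟨?_, ?_, ?_, ?_⟩
        · intro a
          have := h1 (π.symm a); simpa using this
        · intro a b hab
          have := h2 (π.symm a) (π.symm b) (by simpa using hab)
          simpa using this
        · intro a b hab hba
          have hra : r (π (π.symm a)) (π (π.symm b)) := by simpa using hab
          have hne : a ≠ b := by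
            intro h
            subst h
            exact lt_irrefl _ hba
          rcases lt_trichotomy ((π.symm a : Fin p) : ℕ) ((π.symm b : Fin p) : ℕ) with hij | hij | hij
          · rcases (K (π.symm a) (π.symm b)).1 hij with h | h
            · have := flag_mono hflag hab hne
              simp only [Equiv.apply_symm_apply] at h
              omega
            · have := h.2
              simp only [Equiv.apply_symm_apply] at this
              omega
          · have : π.symm a = π.symm b := Fin.ext hij
            exact absurd (π.symm.injective this) hne
          · have := h3 (π.symm a) (π.symm b) hra hij
            simpa using this
        · intro a
          have := h4 (π.symm a); simpa using this
    rw [genRP, genRP]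
    refine finsum_mem_eq_of_bijOn (fun f => f ∘ π) ⟨?_, ?_, ?_⟩ ?_
    · intro f hf
      exact (hiff f).1 hf
    · intro f1 h1 f2 h2 h
      funext a
      have := congrFun h (π.symm a)
      simpa using this
    · intro g hg
      refine ⟨g ∘ π.symm, ?_, ?_⟩
      · have hgg : (g ∘ π.symm) ∘ π = g := by
          funext i; simp
        have := (hiff (g ∘ π.symm)).2 (by rw [hgg]; exact hg)
        exact this
      · funext i; simp
    · intro f _
      exact (Equiv.prod_comp π fun i => X (f i)).symm
end

section
/- Let P be a poset on [p] and ρ a restriction map such that (P,ρ) is well-labelled. For any incomparable pair i < j in P, both (P_{i≺j}, ρ) and (P_{i≻j}, ρ) are well-labelled, where P_{i≺j} and P_{i≻j} denote the transitive closures of P with the added relation i ≺ j, respectively j ≺ i. -/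
open MvPolynomial Finset

lemma addRel_iff (p : ℕ) (r : Fin p → Fin p → Prop) [IsPartialOrder (Fin p) r]
    (u v : Fin p) (hvu : ¬ r v u) (a b : Fin p) :
    addRel p r u v a b ↔ r a b ∨ (r a u ∧ r v b) := by
  constructor
  · intro h
    induction h with
    | single h =>
      rcases h with h | ⟨rfl, rfl⟩
      · exact Or.inl h
      · exact Or.inr ⟨refl_of r _, refl_of r _⟩
    | tail hac hcb ih =>
      rcases hcb with hcb | ⟨rfl, rfl⟩
      · rcases ih with h | ⟨hh1, hh2⟩
        · exact Or.inl (trans_of r h hcb)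
        · exact Or.inr ⟨hh1, trans_of r hh2 hcb⟩
      · rcases ih with h | ⟨hh1, hh2⟩
        · exact Or.inr ⟨h, refl_of r _⟩
        · exact absurd hh2 hvu
  · rintro (h | ⟨hh1, hh2⟩)
    · exact Relation.TransGen.single (Or.inl h)
    · exact Relation.TransGen.head (Or.inl hh1)
        (Relation.TransGen.tail (Relation.TransGen.single (Or.inr ⟨rfl, rfl⟩)) (Or.inl hh2))

lemma wl_add (p : ℕ) (r : Fin p → Fin p → Prop) [IsPartialOrder (Fin p) r]
    (ρ : Fin p → ℤ) (hwl : WellLabelled p r ρ) (u v : Fin p)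
    (h1 : ¬ r u v) (h2 : ¬ r v u)
    (hρ1 : (u : ℕ) < (v : ℕ) → ρ v ≤ ρ u) (hρ2 : (v : ℕ) < (u : ℕ) → ρ u ≤ ρ v) :
    WellLabelled p (addRel p r u v) ρ := by
  have huv : u ≠ v := fun h => h1 (h ▸ refl_of r u)
  constructor
  · rintro a b ⟨hab, hne, hcov⟩
    rw [addRel_iff p r u v h2] at hab
    rcases hab with hab | ⟨hau, hvb⟩
    · exact hwl.1 a b ⟨hab, hne, fun k hk1 hk2 =>
        hcov k (Relation.TransGen.single (Or.inl hk1)) (Relation.TransGen.single (Or.inl hk2))⟩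
    · have hau' : addRel p r u v a u := Relation.TransGen.single (Or.inl hau)
      have hub : addRel p r u v u b := (addRel_iff p r u v h2 u b).2 (Or.inr ⟨refl_of r u, hvb⟩)
      have hav : addRel p r u v a v := (addRel_iff p r u v h2 a v).2 (Or.inr ⟨hau, refl_of r v⟩)
      have hvb' : addRel p r u v v b := Relation.TransGen.single (Or.inl hvb)
      rcases hcov u hau' hub with rfl | rfl
      · rcases hcov v hav hvb' with h | rfl
        · exact absurd h.symm huv
        · exact ⟨hρ1, hρ2⟩
      · exact absurd hvb h2
  · intro a b hna hnb hab
    exact hwl.2 a b (fun h => hna (Relation.TransGen.single (Or.inl h)))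
      (fun h => hnb (Relation.TransGen.single (Or.inl h))) hab

theorem stmt9 (p : ℕ) (r : Fin p → Fin p → Prop) [IsPartialOrder (Fin p) r]
    (ρ : Fin p → ℤ) (hwl : WellLabelled p r ρ) (i j : Fin p)
    (h1 : ¬ r i j) (h2 : ¬ r j i) (hij : (i : ℕ) < (j : ℕ)) :
    WellLabelled p (addRel p r i j) ρ ∧ WellLabelled p (addRel p r j i) ρ :=
  ⟨wl_add p r ρ hwl i j h1 h2 (fun _ => hwl.2 i j h1 h2 hij) (fun h => absurd hij (by omega)),
   wl_add p r ρ hwl j i h2 h1 (fun h => absurd hij (by omega)) (fun _ => hwl.2 i j h1 h2 hij)⟩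
end

section
/- If i and j are incomparable in a poset P on [p], then in the transitive closure P₁ of P with the added relation i ≺ j, the relation i ≺ j is a cover relation. -/
open MvPolynomial Finset

lemma addRel_cases (p : ℕ) (r : Fin p → Fin p → Prop) [IsPartialOrder (Fin p) r]
    (i j a b : Fin p) (h : addRel p r i j a b) :
    r a b ∨ ((r a i ∨ a = i) ∧ (r j b ∨ b = j)) := by
  induction h with
  | single h =>
    rcases h with h | ⟨rfl, rfl⟩
    · exact Or.inl h
    · exact Or.inr ⟨Or.inr rfl, Or.inr rfl⟩
  | tail h2 h3 ih =>
    rcases h3 with h3 | ⟨rfl, rfl⟩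
    · rcases ih with h | ⟨hl, hr⟩
      · exact Or.inl (Trans.trans h h3)
      · refine Or.inr ⟨hl, ?_⟩
        rcases hr with h | rfl
        · exact Or.inl (Trans.trans h h3)
        · exact Or.inl h3
    · rcases ih with h | ⟨hl, _⟩
      · exact Or.inr ⟨Or.inl h, Or.inr rfl⟩
      · exact Or.inr ⟨hl, Or.inr rfl⟩

theorem stmt10 (p : ℕ) (r : Fin p → Fin p → Prop) [IsPartialOrder (Fin p) r]
    (i j : Fin p) (h1 : ¬ r i j) (h2 : ¬ r j i) :
    Covers p (addRel p r i j) i j := by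
  have hne : i ≠ j := by rintro rfl; exact h1 (Std.Refl.refl i)
  refine ⟨Relation.TransGen.single (Or.inr ⟨rfl, rfl⟩), hne, ?_⟩
  intro k hik hkj
  have c1 := addRel_cases p r i j i k hik
  have c2 := addRel_cases p r i j k j hkj
  have c1' : r i k ∨ r j k ∨ k = j := by
    rcases c1 with h | ⟨_, hr⟩
    · exact Or.inl h
    · rcases hr with h | h
      · exact Or.inr (Or.inl h)
      · exact Or.inr (Or.inr h)
  have c2' : r k j ∨ r k i ∨ k = i := by
    rcases c2 with h | ⟨hl, _⟩
    · exact Or.inl h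
    · rcases hl with h | h
      · exact Or.inr (Or.inl h)
      · exact Or.inr (Or.inr h)
  rcases c1' with h | h | rfl
  · rcases c2' with h' | h' | rfl
    · exact absurd (Trans.trans h h') h1
    · exact Or.inl (Std.Antisymm.antisymm (r := r) _ _ h' h)
    · exact Or.inl rfl
  · rcases c2' with h' | h' | rfl
    · exact Or.inr (Std.Antisymm.antisymm (r := r) _ _ h' h)
    · exact absurd (Trans.trans h h') h2
    · exact Or.inl rfl
  · exact Or.inr rfl
end

section
/- Let P be a poset on [p] and ρ a P-flag. Then the generating polynomial 𝔉_{P,ρ} of flagged (P,ρ)-partitions is a non-negative integer linear combination of fundamental slide polynomials. -/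
open MvPolynomial Finset

namespace Stmt12


lemma le_of_steps {α : Type*} [Preorder α] {g : ℕ → α} {a : ℕ} :
    ∀ {b : ℕ}, a ≤ b → (∀ u, a ≤ u → u < b → g u ≤ g (u + 1)) → g a ≤ g b := by
  intro b hab
  induction b, hab using Nat.le_induction with
  | base => intro _; exact le_refl _
  | succ n hn ih =>
    intro h
    exact le_trans (ih fun u hu hu' => h u hu (by omega)) (h n hn (by omega))

/-- descent predicate of a word -/
def Dsc (W : ℕ → ℕ) (u : ℕ) : Prop := W (u + 1) < W u

instance (W : ℕ → ℕ) : DecidablePred (Dsc W) := fun _ => Nat.decLt _ _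

/-- number of descents in `[s,t)` -/
def dcnt (W : ℕ → ℕ) (s t : ℕ) : ℕ := ((Finset.Ico s t).filter (Dsc W)).card

lemma dcnt_self (W : ℕ → ℕ) (s : ℕ) : dcnt W s s = 0 := by simp [dcnt]

lemma dcnt_card (W : ℕ → ℕ) (s t : ℕ) :
    dcnt W s t = ∑ u ∈ Finset.Ico s t, (if Dsc W u then 1 else 0) := by
  rw [dcnt, Finset.card_filter]

lemma dcnt_succ_bot (W : ℕ → ℕ) {s t : ℕ} (h : s < t) :
    dcnt W s t = (if Dsc W s then 1 else 0) + dcnt W (s + 1) t := by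
  rw [dcnt_card, dcnt_card, Finset.sum_eq_sum_Ico_succ_bot h]

lemma dcnt_succ_top (W : ℕ → ℕ) {s t : ℕ} (h : s ≤ t) :
    dcnt W s (t + 1) = dcnt W s t + (if Dsc W t then 1 else 0) := by
  rw [dcnt_card, dcnt_card, Finset.sum_Ico_succ_top h]

lemma dcnt_mono_left (W : ℕ → ℕ) (s t : ℕ) : dcnt W (s + 1) t ≤ dcnt W s t := by
  rcases le_or_gt t s with h | h
  · have : Finset.Ico (s+1) t = ∅ := by
      apply Finset.Ico_eq_empty; omega
    simp [dcnt, this]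
  · rw [dcnt_succ_bot W h]; omega

lemma dcnt_succ_bot_of_not {W : ℕ → ℕ} {s t : ℕ} (h : s < t) (hd : ¬ Dsc W s) :
    dcnt W s t = dcnt W (s + 1) t := by
  rw [dcnt_succ_bot W h, if_neg hd, Nat.zero_add]

lemma dcnt_succ_bot_of_dsc {W : ℕ → ℕ} {s t : ℕ} (h : s < t) (hd : Dsc W s) :
    dcnt W s t = dcnt W (s + 1) t + 1 := by
  rw [dcnt_succ_bot W h, if_pos hd]; omega

/-- walking along steps, counting forced strict increases -/
lemma add_dcnt_le_of_steps {W : ℕ → ℕ} {g : ℕ → ℕ} {a : ℕ} :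
    ∀ {b : ℕ}, a ≤ b →
      (∀ u, a ≤ u → u < b → g u ≤ g (u + 1) ∧ (Dsc W u → g u < g (u + 1))) →
      g a + dcnt W a b ≤ g b := by
  intro b hab
  induction b, hab using Nat.le_induction with
  | base => intro _; simp [dcnt_self]
  | succ n hn ih =>
    intro h
    have h1 := ih fun u hu hu' => h u hu (by omega)
    have h2 := h n hn (by omega)
    rw [dcnt_succ_top W hn]
    by_cases hd : Dsc W n
    · have := h2.2 hd; simp [hd]; omega
    · simp [hd]; omega

/-- a word which drops overall has a descent -/
lemma exists_dsc {W : ℕ → ℕ} {a b : ℕ} (hab : a ≤ b) (h : W b < W a) :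
    ∃ u, a ≤ u ∧ u < b ∧ Dsc W u := by
  by_contra hc
  push_neg at hc
  have : W a ≤ W b := by
    refine le_of_steps hab fun u hu hu' => ?_
    have := hc u hu hu'
    unfold Dsc at this; omega
  omega



/-! ### the maximal partition bound for positional data -/

/-- pointwise maximal value at position `s` (positions `s ≤ t < p`) -/
noncomputable def fstarN (p : ℕ) (W : ℕ → ℕ) (Rn : ℕ → ℕ) (s : ℕ) : ℕ :=
  sInf {v | ∃ t, s ≤ t ∧ t < p ∧ v = Rn t - dcnt W s t}

section FStar

variable {p : ℕ} {W : ℕ → ℕ} {Rn : ℕ → ℕ}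

lemma fstarN_le {s t : ℕ} (hst : s ≤ t) (htp : t < p) :
    fstarN p W Rn s ≤ Rn t - dcnt W s t :=
  Nat.sInf_le ⟨t, hst, htp, rfl⟩

lemma fstarN_mem {s : ℕ} (hs : s < p) :
    ∃ t, s ≤ t ∧ t < p ∧ fstarN p W Rn s = Rn t - dcnt W s t := by
  have h : {v | ∃ t, s ≤ t ∧ t < p ∧ v = Rn t - dcnt W s t}.Nonempty :=
    ⟨Rn s - dcnt W s s, s, le_refl s, hs, rfl⟩
  exact Nat.sInf_mem h

lemma fstarN_le_R {s : ℕ} (hs : s < p) : fstarN p W Rn s ≤ Rn s := by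
  have h := fstarN_le (p := p) (W := W) (Rn := Rn) (le_refl s) hs
  rwa [dcnt_self, Nat.sub_zero] at h

lemma fstarN_mono {s : ℕ} (hs : s + 1 < p) :
    fstarN p W Rn s ≤ fstarN p W Rn (s + 1) := by
  obtain ⟨t, hst, htp, ht⟩ := fstarN_mem (p := p) (W := W) (Rn := Rn) (show s + 1 < p from hs)
  have h1 : fstarN p W Rn s ≤ Rn t - dcnt W s t := fstarN_le (by omega) htp
  have h2 : dcnt W (s + 1) t ≤ dcnt W s t := dcnt_mono_left W s t
  omega

lemma fstarN_strict {s : ℕ} (hs : s + 1 < p) (hd : Dsc W s)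
    (hpos : 1 ≤ fstarN p W Rn (s + 1)) :
    fstarN p W Rn s < fstarN p W Rn (s + 1) := by
  obtain ⟨t, hst, htp, ht⟩ := fstarN_mem (p := p) (W := W) (Rn := Rn) (show s + 1 < p from hs)
  have h1 : fstarN p W Rn s ≤ Rn t - dcnt W s t := fstarN_le (by omega) htp
  have h2 : dcnt W s t = dcnt W (s + 1) t + 1 := dcnt_succ_bot_of_dsc (by omega) hd
  omega

lemma fstarN_flat {s : ℕ} (hs : s + 1 < p) (hd : ¬ Dsc W s) (hr : Rn (s + 1) ≤ Rn s) :
    fstarN p W Rn s = fstarN p W Rn (s + 1) := by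
  refine le_antisymm (fstarN_mono hs) ?_
  obtain ⟨t, hst, htp, ht⟩ := fstarN_mem (p := p) (W := W) (Rn := Rn)
    (show s < p by omega)
  rcases Nat.eq_or_lt_of_le hst with h | h
  · subst h
    have h1 : fstarN p W Rn (s + 1) ≤ Rn (s + 1) := fstarN_le_R hs
    have h2 : dcnt W s s = 0 := dcnt_self W s
    omega
  · have h1 : fstarN p W Rn (s + 1) ≤ Rn t - dcnt W (s + 1) t := fstarN_le h htp
    have h2 : dcnt W s t = dcnt W (s + 1) t := dcnt_succ_bot_of_not h hd
    omega

lemma fstarN_mono_le {s t : ℕ} (hst : s ≤ t) (htp : t < p) :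
    fstarN p W Rn s ≤ fstarN p W Rn t :=
  le_of_steps hst fun u _ hu' => fstarN_mono (by omega)

end FStar

/-! ### positional partitions -/

/-- the set of `(L,ρ)`-partitions in positional, ℕ-bounded form -/
def PartN (p : ℕ) (W : ℕ → ℕ) (Rn : ℕ → ℕ) : Set (ℕ → ℕ) :=
  {g | (∀ s, s < p → 1 ≤ g s ∧ g s ≤ Rn s) ∧
    (∀ s, s + 1 < p → g s ≤ g (s + 1) ∧ (Dsc W s → g s < g (s + 1))) ∧
    ∀ s, p ≤ s → g s = 0}

section PartN

variable {p : ℕ} {W : ℕ → ℕ} {Rn : ℕ → ℕ} {g : ℕ → ℕ}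

lemma PartN_mono (hg : g ∈ PartN p W Rn) {s t : ℕ} (hst : s ≤ t) (htp : t < p) :
    g s ≤ g t :=
  le_of_steps hst fun u _ hu' => (hg.2.1 u (by omega)).1

lemma PartN_le_fstar (hg : g ∈ PartN p W Rn) {s : ℕ} (hs : s < p) :
    g s ≤ fstarN p W Rn s := by
  obtain ⟨t, hst, htp, ht⟩ := fstarN_mem (p := p) (W := W) (Rn := Rn) hs
  have h1 : g s + dcnt W s t ≤ g t :=
    add_dcnt_le_of_steps hst fun u hu hu' => hg.2.1 u (by omega)
  have h2 : g t ≤ Rn t := (hg.1 t htp).2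
  omega

lemma PartN_empty (hp : 0 < p) (h0 : fstarN p W Rn 0 = 0) : PartN p W Rn = ∅ := by
  ext g
  simp only [Set.mem_empty_iff_false, iff_false]
  intro hg
  have h1 := (hg.1 0 hp).1
  have h2 := PartN_le_fstar hg hp
  omega

lemma fstarN_pos_all (hpos : 1 ≤ fstarN p W Rn 0) {s : ℕ} (hs : s < p) :
    1 ≤ fstarN p W Rn s :=
  le_trans hpos (fstarN_mono_le (Nat.zero_le s) hs)

end PartN

/-! ### finiteness helpers -/

lemma finite_of_bounded {S : Set (ℕ → ℕ)} {p M : ℕ}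
    (h : ∀ g ∈ S, (∀ s, s < p → g s ≤ M) ∧ ∀ s, p ≤ s → g s = 0) : S.Finite := by
  have : Finite (Fin p → Fin (M + 1)) := inferInstance
  apply Set.Finite.of_finite_image (f := fun (g : ℕ → ℕ) (i : Fin p) =>
    (⟨min (g (i : ℕ)) M, by omega⟩ : Fin (M + 1)))
  · exact Set.Finite.subset Set.finite_univ (Set.subset_univ _)
  · intro g1 h1 g2 h2 heq
    funext s
    rcases lt_or_ge s p with hs | hs
    · have e1 : g1 s ≤ M := (h g1 h1).1 s hs
      have e2 : g2 s ≤ M := (h g2 h2).1 s hs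
      have := congrFun heq ⟨s, hs⟩
      simp only [Fin.mk.injEq] at this
      omega
    · rw [(h g1 h1).2 s hs, (h g2 h2).2 s hs]

lemma finite_of_bounded_fin {p : ℕ} {S : Set (Fin p → ℕ)} {M : ℕ}
    (h : ∀ f ∈ S, ∀ i, f i ≤ M) : S.Finite := by
  have : Finite (Fin p → Fin (M + 1)) := inferInstance
  apply Set.Finite.of_finite_image (f := fun (g : Fin p → ℕ) (i : Fin p) =>
    (⟨min (g i) M, by omega⟩ : Fin (M + 1)))
  · exact Set.Finite.subset Set.finite_univ (Set.subset_univ _)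
  · intro g1 h1 g2 h2 heq
    funext i
    have e1 : g1 i ≤ M := h g1 h1 i
    have e2 : g2 i ≤ M := h g2 h2 i
    have := congrFun heq i
    simp only [Fin.mk.injEq] at this
    omega

lemma partN_finite : (PartN p W Rn).Finite := by
  apply finite_of_bounded (p := p) (M := (Finset.range p).sup Rn)
  intro g hg
  exact ⟨fun s hs => le_trans (hg.1 s hs).2 (Finset.le_sup (Finset.mem_range.mpr hs)),
    hg.2.2⟩


/-! ### counting lemmas -/

/-- the content (weight) of `g` on positions `< p` -/
def content (p : ℕ) (g : ℕ → ℕ) : ℕ → ℕ := fun m =>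
  ((Finset.range p).filter fun s => g s = m + 1).card

/-- number of positions with value `≤ k` -/
def cntle (p : ℕ) (g : ℕ → ℕ) (k : ℕ) : ℕ :=
  ((Finset.range p).filter fun s => g s ≤ k).card

lemma cntle_le (p : ℕ) (g : ℕ → ℕ) (k : ℕ) : cntle p g k ≤ p := by
  have h := Finset.card_filter_le (Finset.range p) (fun s => g s ≤ k)
  simpa [cntle] using h

lemma sum_content {p : ℕ} {g : ℕ → ℕ} (hpos : ∀ s, s < p → 1 ≤ g s) (k : ℕ) :
    ∑ m ∈ Finset.range k, content p g m = cntle p g k := by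
  classical
  unfold content cntle
  rw [Finset.card_eq_sum_card_fiberwise
    (f := fun s => g s - 1) (t := Finset.range k) ?_]
  · refine Finset.sum_congr rfl fun m hm => ?_
    have hmk : m < k := Finset.mem_range.mp hm
    congr 1
    ext s
    simp only [Finset.mem_filter, Finset.mem_range, and_assoc]
    constructor <;>
      (intro h; have h1 := hpos s h.1; revert h; intro h; obtain ⟨h2, h3⟩ := h
       refine ⟨h2, ?_⟩ <;> omega)
  · intro s hs
    simp only [Finset.mem_coe, Finset.mem_filter, Finset.mem_range] at hs ⊢
    have := hpos s hs.1
    omega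

lemma downward_closed_eq_range {K : Finset ℕ}
    (hdc : ∀ s t, s ≤ t → t ∈ K → s ∈ K) : K = Finset.range K.card := by
  ext u
  constructor
  · intro hu
    have hsub : Finset.range (u + 1) ⊆ K := fun s hs =>
      hdc s u (by have := Finset.mem_range.mp hs; omega) hu
    have := Finset.card_le_card hsub
    simp only [Finset.card_range] at this
    exact Finset.mem_range.mpr (by omega)
  · intro hu
    have hu' : u < K.card := Finset.mem_range.mp hu
    by_contra hc
    have hsub : K ⊆ Finset.range u := by
      intro v hv
      rcases lt_or_ge v u with h | h
      · exact Finset.mem_range.mpr h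
      · exact absurd (hdc u v h hv) hc
    have := Finset.card_le_card hsub
    simp only [Finset.card_range] at this
    omega

/-- for monotone `g`, the set of positions with value `≤ k` is an initial range -/
lemma filter_le_eq_range {p : ℕ} {g : ℕ → ℕ}
    (hmono : ∀ s t, s ≤ t → t < p → g s ≤ g t) (k : ℕ) :
    (Finset.range p).filter (fun s => g s ≤ k) = Finset.range (cntle p g k) := by
  unfold cntle
  apply downward_closed_eq_range
  intro s t hst ht
  simp only [Finset.mem_filter, Finset.mem_range] at *
  exact ⟨by omega, le_trans (hmono s t hst ht.1) ht.2⟩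

lemma cntle_char {p : ℕ} {g : ℕ → ℕ}
    (hmono : ∀ s t, s ≤ t → t < p → g s ≤ g t) {k s : ℕ} (hs : s < p) :
    g s ≤ k ↔ s < cntle p g k := by
  have h := filter_le_eq_range hmono (g := g) k
  constructor
  · intro hk
    have : s ∈ (Finset.range p).filter (fun s => g s ≤ k) := by
      simp [Finset.mem_filter, Finset.mem_range, hs, hk]
    rw [h] at this
    exact Finset.mem_range.mp this
  · intro hk
    have : s ∈ Finset.range (cntle p g k) := Finset.mem_range.mpr hk
    rw [← h] at this
    exact (Finset.mem_filter.mp this).2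

/-! ### the slide set -/

def Bslide (n : ℕ) (a : ℕ → ℕ) : Set (ℕ → ℕ) :=
  {b | (∀ m, n ≤ m → b m = 0) ∧ Dominates b a ∧ FlatRefines n b a}

lemma slide_eq (n : ℕ) (a : ℕ → ℕ) :
    slide n a = ∑ᶠ b ∈ Bslide n a, ∏ m ∈ Finset.range n, (X (m+1) : MvPolynomial ℕ ℤ) ^ b m :=
  rfl

/-! ### the core section -/

section Core

variable {p : ℕ} {W : ℕ → ℕ} {Rn : ℕ → ℕ}
variable (hp : 0 < p)
variable (hw : ∀ s, s + 1 < p → ¬ Dsc W s → Rn (s + 1) ≤ Rn s)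
variable (hpos : 1 ≤ fstarN p W Rn 0)

/-- the content of the maximal partition -/
noncomputable def acomp (p : ℕ) (W : ℕ → ℕ) (Rn : ℕ → ℕ) : ℕ → ℕ :=
  content p (fstarN p W Rn)

noncomputable def nbound (p : ℕ) (W : ℕ → ℕ) (Rn : ℕ → ℕ) : ℕ := fstarN p W Rn (p - 1)

lemma fstar_le_nbound {s : ℕ} (hs : s < p) : fstarN p W Rn s ≤ nbound p W Rn :=
  fstarN_mono_le (by omega) (by omega)

include hw hpos in
lemma fstar_jump_dsc {s : ℕ} (hs : s + 1 < p)
    (hj : fstarN p W Rn s < fstarN p W Rn (s + 1)) : Dsc W s := by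
  by_contra hd
  rw [fstarN_flat hs hd (hw s hs hd)] at hj
  omega

include hpos in
lemma fstar_strict_of_dsc {s : ℕ} (hs : s + 1 < p) (hd : Dsc W s) :
    fstarN p W Rn s < fstarN p W Rn (s + 1) :=
  fstarN_strict hs hd (fstarN_pos_all hpos (by omega))

lemma fstar_mono' : ∀ s t, s ≤ t → t < p → fstarN p W Rn s ≤ fstarN p W Rn t :=
  fun _ _ hst htp => fstarN_mono_le hst htp

include hpos in
lemma acomp_supp {m : ℕ} (hm : nbound p W Rn ≤ m) : acomp p W Rn m = 0 := by
  unfold acomp content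
  rw [Finset.card_eq_zero, Finset.filter_eq_empty_iff]
  intro s hs
  have h1 := fstar_le_nbound (p := p) (W := W) (Rn := Rn) (Finset.mem_range.mp hs)
  omega

include hpos in
lemma asum_eq (k : ℕ) :
    ∑ m ∈ Finset.range k, acomp p W Rn m = cntle p (fstarN p W Rn) k :=
  sum_content (fun s hs => fstarN_pos_all hpos hs) k

include hp hpos in
lemma asum_total : ∑ m ∈ Finset.range (nbound p W Rn), acomp p W Rn m = p := by
  rw [asum_eq hpos]
  unfold cntle
  rw [Finset.filter_true_of_mem, Finset.card_range]
  intro s hs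
  exact fstar_le_nbound (Finset.mem_range.mp hs)

end Core


section CoreBij

variable {p : ℕ} {W : ℕ → ℕ} {Rn : ℕ → ℕ}

/-- difference formula for the content -/
lemma content_diff (p : ℕ) (g : ℕ → ℕ) (m : ℕ) :
    content p g m = cntle p g (m + 1) - cntle p g m := by
  unfold content cntle
  have hsub : (Finset.range p).filter (fun s => g s ≤ m) ⊆
      (Finset.range p).filter (fun s => g s ≤ m + 1) := by
    intro s hs
    simp only [Finset.mem_filter] at hs ⊢
    exact ⟨hs.1, by omega⟩
  have hsd : (Finset.range p).filter (fun s => g s = m + 1) =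
      ((Finset.range p).filter (fun s => g s ≤ m + 1)) \
        ((Finset.range p).filter (fun s => g s ≤ m)) := by
    ext s
    simp only [Finset.mem_filter, Finset.mem_sdiff, Finset.mem_range]
    constructor
    · intro h
      exact ⟨⟨h.1, by omega⟩, by intro hc; omega⟩
    · intro h
      have h1 := h.1
      have h2 := h.2
      constructor
      · exact h1.1
      · by_contra hc
        exact h2 ⟨h1.1, by omega⟩
  rw [hsd, Finset.card_sdiff_of_subset hsub]

lemma cntle_mono_k (p : ℕ) (g : ℕ → ℕ) {k k' : ℕ} (h : k ≤ k') :
    cntle p g k ≤ cntle p g k' := by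
  apply Finset.card_le_card
  intro s hs
  simp only [Finset.mem_filter] at hs ⊢
  exact ⟨hs.1, by omega⟩

variable (hp : 0 < p)
variable (hw : ∀ s, s + 1 < p → ¬ Dsc W s → Rn (s + 1) ≤ Rn s)
variable (hpos : 1 ≤ fstarN p W Rn 0)

include hp hw hpos in
lemma content_mem_Bslide {g : ℕ → ℕ} (hg : g ∈ PartN p W Rn) :
    content p g ∈ Bslide (nbound p W Rn) (acomp p W Rn) := by
  have gpos : ∀ s, s < p → 1 ≤ g s := fun s hs => (hg.1 s hs).1
  have gmono : ∀ s t, s ≤ t → t < p → g s ≤ g t := fun s t hst htp =>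
    PartN_mono hg hst htp
  have gleF : ∀ s, s < p → g s ≤ fstarN p W Rn s := fun s hs => PartN_le_fstar hg hs
  have gleN : ∀ s, s < p → g s ≤ nbound p W Rn := fun s hs =>
    le_trans (gleF s hs) (fstar_le_nbound hs)
  have Fmono : ∀ s t, s ≤ t → t < p → fstarN p W Rn s ≤ fstarN p W Rn t :=
    fun s t hst htp => fstarN_mono_le hst htp
  have Fpos : ∀ s, s < p → 1 ≤ fstarN p W Rn s := fun s hs => fstarN_pos_all hpos hs
  refine ⟨?_, ?_, ?_, ?_⟩
  · -- support
    intro m hm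
    unfold content
    rw [Finset.card_eq_zero, Finset.filter_eq_empty_iff]
    intro s hs
    have := gleN s (Finset.mem_range.mp hs)
    omega
  · -- dominance
    intro k
    rw [asum_eq hpos, sum_content gpos]
    apply Finset.card_le_card
    intro s hs
    simp only [Finset.mem_filter] at hs ⊢
    exact ⟨hs.1, le_trans (gleF s (Finset.mem_range.mp hs.1)) hs.2⟩
  · -- total
    rw [sum_content gpos, asum_total hp hpos]
    unfold cntle
    rw [Finset.filter_true_of_mem, Finset.card_range]
    intro s hs
    exact gleN s (Finset.mem_range.mp hs)
  · -- refinement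
    intro k hk
    rw [asum_eq hpos]
    set s₀ := cntle p (fstarN p W Rn) k with hs₀
    have hs₀p : s₀ ≤ p := cntle_le _ _ _
    rcases Nat.eq_zero_or_pos s₀ with h0 | h0
    · refine ⟨0, Nat.zero_le _, ?_⟩
      simp [h0]
    rcases Nat.eq_or_lt_of_le hs₀p with hsp | hsp
    · refine ⟨nbound p W Rn, le_refl _, ?_⟩
      rw [sum_content gpos]
      unfold cntle
      rw [Finset.filter_true_of_mem, Finset.card_range, hsp]
      intro s hs
      exact gleN s (Finset.mem_range.mp hs)
    · -- 0 < s₀ < p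
      set s₁ := s₀ - 1 with hs₁def
      have hs₁ : s₁ + 1 = s₀ := by omega
      have hF1 : fstarN p W Rn s₁ ≤ k := by
        have := (cntle_char Fmono (show s₁ < p by omega)).mpr
          (show s₁ < cntle p (fstarN p W Rn) k by omega)
        exact this
      have hF2 : ¬ fstarN p W Rn s₀ ≤ k := by
        intro hc
        have := (cntle_char Fmono (show s₀ < p by omega)).mp hc
        omega
      have hdsc : Dsc W s₁ := by
        apply fstar_jump_dsc hw hpos (show s₁ + 1 < p by omega)
        rw [hs₁]; omega
      have hgd : g s₁ < g (s₁ + 1) := (hg.2.1 s₁ (by omega)).2 hdsc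
      refine ⟨g s₁, gleN s₁ (by omega), ?_⟩
      rw [sum_content gpos]
      have : cntle p g (g s₁) = s₀ := by
        have h1 : s₁ < cntle p g (g s₁) :=
          (cntle_char gmono (show s₁ < p by omega)).mp (le_refl _)
        have h2 : ¬ (s₁ + 1 < cntle p g (g s₁)) := by
          intro hc
          have := (cntle_char gmono (show s₁ + 1 < p by omega)).mpr hc
          omega
        omega
      omega

lemma content_injOn : Set.InjOn (content p) (PartN p W Rn) := by
  intro g hg h hh he
  have gpos : ∀ s, s < p → 1 ≤ g s := fun s hs => (hg.1 s hs).1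
  have hpos' : ∀ s, s < p → 1 ≤ h s := fun s hs => (hh.1 s hs).1
  have gmono : ∀ s t, s ≤ t → t < p → g s ≤ g t := fun s t hst htp =>
    PartN_mono hg hst htp
  have hmono : ∀ s t, s ≤ t → t < p → h s ≤ h t := fun s t hst htp =>
    PartN_mono hh hst htp
  have hcnt : ∀ k, cntle p g k = cntle p h k := by
    intro k
    rw [← sum_content gpos, ← sum_content hpos', he]
  funext s
  rcases lt_or_ge s p with hs | hs
  · have h1 : h s ≤ g s := by
      have := (cntle_char gmono hs).mp (le_refl (g s))
      rw [hcnt] at this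
      exact (cntle_char hmono hs).mpr this
    have h2 : g s ≤ h s := by
      have := (cntle_char hmono hs).mp (le_refl (h s))
      rw [← hcnt] at this
      exact (cntle_char gmono hs).mpr this
    omega
  · rw [hg.2.2 s hs, hh.2.2 s hs]

include hp hw hpos in
lemma content_surjOn {b : ℕ → ℕ} (hb : b ∈ Bslide (nbound p W Rn) (acomp p W Rn)) :
    ∃ g ∈ PartN p W Rn, content p g = b := by
  obtain ⟨hsupp, hdom, htot, href⟩ := hb
  set N := nbound p W Rn with hN
  set F := fstarN p W Rn with hF
  have Fmono : ∀ s t, s ≤ t → t < p → F s ≤ F t :=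
    fun s t hst htp => fstarN_mono_le hst htp
  have Fpos : ∀ s, s < p → 1 ≤ F s := fun s hs => fstarN_pos_all hpos hs
  have FleN : ∀ s, s < p → F s ≤ N := fun s hs => fstar_le_nbound hs
  set Bb := fun k => ∑ m ∈ Finset.range k, b m with hBb
  have hBbmono : ∀ {k k'}, k ≤ k' → Bb k ≤ Bb k' := by
    intro k k' h
    apply Finset.sum_le_sum_of_subset
    exact Finset.range_subset_range.mpr h
  have hBbN : Bb N = p := by
    show (∑ m ∈ Finset.range N, b m) = p
    rw [htot, asum_total hp hpos]
  have hBb0 : Bb 0 = 0 := by simp [hBb]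
  have hdom' : ∀ k, cntle p F k ≤ Bb k := by
    intro k
    have := hdom k
    rwa [asum_eq hpos] at this
  set g : ℕ → ℕ := fun s => if s < p then sInf {v | s < Bb v} else 0 with hgdef
  have hchar : ∀ s, s < p → ∀ k, (g s ≤ k ↔ s < Bb k) := by
    intro s hs k
    have hne : {v | s < Bb v}.Nonempty := ⟨N, by simp only [Set.mem_setOf_eq]; omega⟩
    have hgs : g s = sInf {v | s < Bb v} := by rw [hgdef]; simp [hs]
    constructor
    · intro hk
      have hmem : s < Bb (g s) := by
        rw [hgs]; exact Nat.sInf_mem hne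
      exact lt_of_lt_of_le hmem (hBbmono hk)
    · intro hk
      rw [hgs]
      exact Nat.sInf_le hk
  have hg1 : ∀ s, s < p → 1 ≤ g s := by
    intro s hs
    by_contra hc
    have : g s ≤ 0 := by omega
    have := (hchar s hs 0).mp this
    omega
  have hgF : ∀ s, s < p → g s ≤ F s := by
    intro s hs
    apply (hchar s hs (F s)).mpr
    have h1 : s + 1 ≤ cntle p F (F s) := (cntle_char Fmono hs).mp (le_refl _)
    have := hdom' (F s)
    omega
  have hgmono : ∀ s, s + 1 < p → g s ≤ g (s + 1) := by
    intro s hs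
    apply (hchar s (by omega) (g (s + 1))).mpr
    have := (hchar (s+1) hs (g (s+1))).mp (le_refl _)
    omega
  have hgstrict : ∀ s, s + 1 < p → Dsc W s → g s < g (s + 1) := by
    intro s hs hd
    have hFs : F s < F (s + 1) := fstar_strict_of_dsc hpos hs hd
    have hA : cntle p F (F s) = s + 1 := by
      have h1 : s < cntle p F (F s) := (cntle_char Fmono (by omega)).mp (le_refl _)
      have h2 : ¬ (s + 1 < cntle p F (F s)) := by
        intro hc
        have := (cntle_char Fmono hs).mpr hc
        omega
      omega
    obtain ⟨k', hk'N, hk'⟩ := href (F s) (FleN s (by omega))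
    rw [asum_eq hpos, ← hF, hA] at hk'
    have hk2 : Bb k' = s + 1 := hk'
    have hle : g s ≤ k' := (hchar s (by omega) k').mpr (by omega)
    have hgt : ¬ (g (s + 1) ≤ k') := by
      intro hc
      have := (hchar (s + 1) hs k').mp hc
      omega
    omega
  have hgmem : g ∈ PartN p W Rn := by
    refine ⟨fun s hs => ⟨hg1 s hs, ?_⟩, fun s hs => ⟨hgmono s hs, hgstrict s hs⟩, ?_⟩
    · exact le_trans (hgF s hs) (le_trans (fstarN_le_R hs) (le_refl _))
    · intro s hs
      rw [hgdef]
      simp [show ¬ s < p by omega]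
  refine ⟨g, hgmem, ?_⟩
  have hcnt : ∀ k, k ≤ N → cntle p g k = Bb k := by
    intro k hk
    unfold cntle
    have : (Finset.range p).filter (fun s => g s ≤ k) = Finset.range (Bb k) := by
      ext s
      simp only [Finset.mem_filter, Finset.mem_range]
      constructor
      · intro ⟨hs, hgs⟩
        exact (hchar s hs k).mp hgs
      · intro hs
        have hsp : s < p := by
          have := hBbmono hk
          omega
        exact ⟨hsp, (hchar s hsp k).mpr hs⟩
    rw [this, Finset.card_range]
  funext m
  rcases lt_or_ge m N with hm | hm
  · rw [content_diff, hcnt (m + 1) (by omega), hcnt m (by omega)]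
    have : Bb (m + 1) = Bb m + b m := Finset.sum_range_succ b m
    omega
  · rw [hsupp m hm]
    unfold content
    rw [Finset.card_eq_zero, Finset.filter_eq_empty_iff]
    intro s hs
    have h1 := hgF s (Finset.mem_range.mp hs)
    have h2 := FleN s (Finset.mem_range.mp hs)
    omega

lemma monomial_eq {g : ℕ → ℕ} (hg : g ∈ PartN p W Rn)
    {n : ℕ} (hn : ∀ s, s < p → g s ≤ n) :
    ∏ s ∈ Finset.range p, (X (g s) : MvPolynomial ℕ ℤ) =
      ∏ m ∈ Finset.range n, (X (m + 1) : MvPolynomial ℕ ℤ) ^ content p g m := by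
  classical
  have gpos : ∀ s, s < p → 1 ≤ g s := fun s hs => (hg.1 s hs).1
  rw [← Finset.prod_fiberwise_of_maps_to (g := fun s => g s - 1) (t := Finset.range n)
    (fun s hs => by
      have h1 := gpos s (Finset.mem_range.mp hs)
      have h2 := hn s (Finset.mem_range.mp hs)
      have h3 : g s - 1 < n := by omega
      simpa using h3)
    (fun s => (X (g s) : MvPolynomial ℕ ℤ))]
  refine Finset.prod_congr rfl fun m hm => ?_
  have hfib : (Finset.range p).filter (fun s => g s - 1 = m) =
      (Finset.range p).filter (fun s => g s = m + 1) := by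
    ext s
    simp only [Finset.mem_filter, Finset.mem_range]
    constructor
    · intro ⟨hs, h⟩
      have := gpos s hs
      exact ⟨hs, by omega⟩
    · intro ⟨hs, h⟩
      exact ⟨hs, by omega⟩
  rw [hfib]
  have hcongr : ∀ s ∈ (Finset.range p).filter (fun s => g s = m + 1),
      (X (g s) : MvPolynomial ℕ ℤ) = X (m + 1) := by
    intro s hs
    rw [(Finset.mem_filter.mp hs).2]
  rw [Finset.prod_congr rfl hcongr, Finset.prod_const]
  rfl

include hp hw hpos in
theorem core_eq :
    ∑ᶠ g ∈ PartN p W Rn, ∏ s ∈ Finset.range p, (X (g s) : MvPolynomial ℕ ℤ) =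
      slide (nbound p W Rn) (acomp p W Rn) := by
  rw [slide_eq]
  apply finsum_mem_eq_of_bijOn (content p)
  · refine ⟨fun g hg => content_mem_Bslide hp hw hpos hg, content_injOn, ?_⟩
    intro b hb
    obtain ⟨g, hg, he⟩ := content_surjOn hp hw hpos hb
    exact ⟨g, hg, he⟩
  · intro g hg
    exact monomial_eq hg fun s hs =>
      le_trans (PartN_le_fstar hg hs) (fstar_le_nbound hs)

end CoreBij


/-! ### stability of slide polynomials under enlarging n -/

lemma sum_range_stable {f : ℕ → ℕ} {n n' : ℕ} (hsupp : ∀ m, n ≤ m → f m = 0)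
    (h : n ≤ n') : ∑ m ∈ Finset.range n', f m = ∑ m ∈ Finset.range n, f m := by
  symm
  apply Finset.sum_subset (Finset.range_subset_range.mpr h)
  intro m hm hnm
  exact hsupp m (by simp only [Finset.mem_range, not_lt] at hnm; exact hnm)

lemma Bslide_stable {n n' : ℕ} {a : ℕ → ℕ} (hsupp : ∀ m, n ≤ m → a m = 0)
    (h : n ≤ n') : Bslide n' a = Bslide n a := by
  have htot : ∑ m ∈ Finset.range n', a m = ∑ m ∈ Finset.range n, a m :=
    sum_range_stable hsupp h
  ext b
  constructor
  · rintro ⟨hbs, hbd, hbt, hbr⟩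
    have hico : ∀ m ∈ Finset.Ico n n', b m = 0 := by
      have h1 : ∑ m ∈ Finset.range n, b m + ∑ m ∈ Finset.Ico n n', b m
          = ∑ m ∈ Finset.range n', b m := Finset.sum_range_add_sum_Ico b h
      have h2 := hbd n
      rw [hbt, htot] at h1
      have h3 : ∑ m ∈ Finset.Ico n n', b m = 0 := by omega
      intro m hm
      exact Finset.sum_eq_zero_iff.mp h3 m hm
    have hbs' : ∀ m, n ≤ m → b m = 0 := by
      intro m hm
      rcases lt_or_ge m n' with h' | h'
      · exact hico m (Finset.mem_Ico.mpr ⟨hm, h'⟩)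
      · exact hbs m h'
    have hbtn : ∑ m ∈ Finset.range n, b m = ∑ m ∈ Finset.range n, a m := by
      rw [← sum_range_stable hbs' h, hbt, htot]
    refine ⟨hbs', hbd, hbtn, ?_⟩
    intro k hk
    obtain ⟨k', hk', he⟩ := hbr k (le_trans hk h)
    rcases le_or_gt k' n with h'' | h''
    · exact ⟨k', h'', he⟩
    · refine ⟨n, le_refl n, ?_⟩
      rw [← he]
      exact (sum_range_stable hbs' (le_of_lt h'')).symm
  · rintro ⟨hbs, hbd, hbt, hbr⟩
    have hbtot : ∑ m ∈ Finset.range n', b m = ∑ m ∈ Finset.range n, b m :=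
      sum_range_stable hbs h
    refine ⟨fun m hm => hbs m (le_trans h hm), hbd, by rw [htot, hbtot, hbt], ?_⟩
    intro k hk
    rcases le_or_gt k n with h' | h'
    · obtain ⟨k', hk', he⟩ := hbr k h'
      exact ⟨k', le_trans hk' h, he⟩
    · refine ⟨n, h, ?_⟩
      have ha : ∑ m ∈ Finset.range k, a m = ∑ m ∈ Finset.range n, a m :=
        sum_range_stable hsupp (le_of_lt h')
      rw [hbt, ha]

lemma slide_stable {n n' : ℕ} {a : ℕ → ℕ} (hsupp : ∀ m, n ≤ m → a m = 0)
    (h : n ≤ n') : slide n' a = slide n a := by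
  rw [slide_eq, slide_eq, Bslide_stable hsupp h]
  apply finsum_mem_congr rfl
  intro b hb
  symm
  apply Finset.prod_subset (Finset.range_subset_range.mpr h)
  intro m hm hnm
  rw [hb.1 m (by simp only [Finset.mem_range, not_lt] at hnm; exact hnm), pow_zero]

/-! ### decomposability -/

/-- `P` is a nonnegative integer combination of fundamental slide polynomials -/
def Decomp (P : MvPolynomial ℕ ℤ) : Prop :=
  ∃ (n : ℕ) (S : Finset (ℕ → ℕ)) (c : (ℕ → ℕ) → ℕ),
    (∀ a ∈ S, ∀ m, n ≤ m → a m = 0) ∧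
    P = ∑ a ∈ S, (c a : ℤ) • slide n a

lemma decomp_zero : Decomp 0 :=
  ⟨0, ∅, fun _ => 0, by simp, by simp⟩

lemma decomp_congr {P Q : MvPolynomial ℕ ℤ} (h : P = Q) (hQ : Decomp Q) : Decomp P :=
  h ▸ hQ

lemma decomp_slide {n : ℕ} {a : ℕ → ℕ} (ha : ∀ m, n ≤ m → a m = 0) :
    Decomp (slide n a) := by
  refine ⟨n, {a}, fun _ => 1, ?_, ?_⟩
  · intro a' ha'
    rw [Finset.mem_singleton] at ha'
    subst ha'
    exact ha
  · simp

lemma decomp_add {P Q : MvPolynomial ℕ ℤ} (hP : Decomp P) (hQ : Decomp Q) :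
    Decomp (P + Q) := by
  classical
  obtain ⟨n₁, S₁, c₁, hs₁, he₁⟩ := hP
  obtain ⟨n₂, S₂, c₂, hs₂, he₂⟩ := hQ
  set n := max n₁ n₂ with hn
  have ext1 : ∀ (S T : Finset (ℕ → ℕ)), S ⊆ T → ∀ (c : (ℕ → ℕ) → ℕ),
      ∑ a ∈ S, (c a : ℤ) • slide n a
        = ∑ a ∈ T, ((if a ∈ S then c a else 0 : ℕ) : ℤ) • slide n a := by
    intro S T hST c
    rw [← Finset.sum_subset hST (fun a _ ha => by simp [ha])]
    apply Finset.sum_congr rfl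
    intro a ha
    rw [if_pos ha]
  have hP' : P = ∑ a ∈ S₁ ∪ S₂, ((if a ∈ S₁ then c₁ a else 0 : ℕ) : ℤ) • slide n a := by
    rw [he₁, ← ext1 S₁ (S₁ ∪ S₂) Finset.subset_union_left c₁]
    apply Finset.sum_congr rfl
    intro a ha
    rw [slide_stable (hs₁ a ha) (le_max_left n₁ n₂)]
  have hQ' : Q = ∑ a ∈ S₁ ∪ S₂, ((if a ∈ S₂ then c₂ a else 0 : ℕ) : ℤ) • slide n a := by
    rw [he₂, ← ext1 S₂ (S₁ ∪ S₂) Finset.subset_union_right c₂]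
    apply Finset.sum_congr rfl
    intro a ha
    rw [slide_stable (hs₂ a ha) (le_max_right n₁ n₂)]
  refine ⟨n, S₁ ∪ S₂,
    fun a => (if a ∈ S₁ then c₁ a else 0) + (if a ∈ S₂ then c₂ a else 0), ?_, ?_⟩
  · intro a ha m hm
    rcases Finset.mem_union.mp ha with h | h
    · exact hs₁ a h m (le_trans (le_max_left n₁ n₂) hm)
    · exact hs₂ a h m (le_trans (le_max_right n₁ n₂) hm)
  · rw [hP', hQ', ← Finset.sum_add_distrib]
    apply Finset.sum_congr rfl
    intro a _
    rw [Nat.cast_add, add_smul]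

/-! ### decomposability of the positional generating function -/

noncomputable def genN (p : ℕ) (W : ℕ → ℕ) (Rn : ℕ → ℕ) : MvPolynomial ℕ ℤ :=
  ∑ᶠ g ∈ PartN p W Rn, ∏ s ∈ Finset.range p, (X (g s) : MvPolynomial ℕ ℤ)

lemma decomp_genN {p : ℕ} {W : ℕ → ℕ} {Rn : ℕ → ℕ} (hp : 0 < p)
    (hw : ∀ s, s + 1 < p → ¬ Dsc W s → Rn (s + 1) ≤ Rn s) :
    Decomp (genN p W Rn) := by
  rcases Nat.eq_zero_or_pos (fstarN p W Rn 0) with h0 | h0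
  · apply decomp_congr (Q := 0) _ decomp_zero
    unfold genN
    rw [PartN_empty hp h0, finsum_mem_empty]
  · apply decomp_congr (core_eq hp hw h0)
    exact decomp_slide fun m hm => acomp_supp h0 hm


/-! ### splitting along an incomparable pair -/

section Split

variable {p : ℕ} {r : Fin p → Fin p → Prop} (hr : IsPartialOrder (Fin p) r)

include hr in
lemma addRel_char {i j a b : Fin p} :
    addRel p r i j a b ↔ r a b ∨ (r a i ∧ r j b) := by
  haveI := hr
  constructor
  · intro h
    induction h with
    | single h =>
      rcases h with h | ⟨h1, h2⟩
      · exact Or.inl h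
      · subst h1; subst h2
        exact Or.inr ⟨refl_of r _, refl_of r _⟩
    | tail hab hbc ih =>
      rcases hbc with h | ⟨h1, h2⟩
      · rcases ih with h' | ⟨h1', h2'⟩
        · exact Or.inl (trans_of r h' h)
        · exact Or.inr ⟨h1', trans_of r h2' h⟩
      · subst h1; subst h2
        rcases ih with h' | ⟨h1', h2'⟩
        · exact Or.inr ⟨h', refl_of r _⟩
        · exact Or.inr ⟨h1', refl_of r _⟩
  · rintro (h | ⟨h1, h2⟩)
    · exact Relation.TransGen.single (Or.inl h)
    · exact Relation.TransGen.trans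
        (Relation.TransGen.single (Or.inl h1))
        (Relation.TransGen.trans
          (Relation.TransGen.single (Or.inr ⟨rfl, rfl⟩))
          (Relation.TransGen.single (Or.inl h2)))

include hr in
lemma addRel_po {i j : Fin p} (hij : ¬ r i j) (hji : ¬ r j i) :
    IsPartialOrder (Fin p) (addRel p r i j) := by
  haveI := hr
  refine { refl := ?_, trans := ?_, antisymm := ?_ }
  · intro a
    exact Relation.TransGen.single (Or.inl (refl_of r a))
  · intro a b c hab hbc
    exact Relation.TransGen.trans hab hbc
  · intro a b hab hba
    rw [addRel_char hr] at hab hba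
    rcases hab with h1 | ⟨h1, h2⟩ <;> rcases hba with h3 | ⟨h3, h4⟩
    · exact antisymm_of r h1 h3
    · exact absurd (trans_of r h4 (trans_of r h1 h3)) hji
    · exact absurd (trans_of r h2 (trans_of r h3 h1)) hji
    · exact absurd (trans_of r h4 h1) hji

include hr in
lemma isRP_addRel₁ {i j : Fin p} (hij : ¬ r i j) (hji : ¬ r j i)
    (hlt : (i : ℕ) < (j : ℕ)) {ρ : Fin p → ℤ} {f : Fin p → ℕ} :
    IsRP p (addRel p r i j) ρ f ↔ IsRP p r ρ f ∧ f i ≤ f j := by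
  haveI := hr
  constructor
  · intro h
    refine ⟨⟨h.1, ?_, ?_, h.2.2.2⟩, ?_⟩
    · exact fun a b hab => h.2.1 a b (Relation.TransGen.single (Or.inl hab))
    · exact fun a b hab => h.2.2.1 a b (Relation.TransGen.single (Or.inl hab))
    · exact h.2.1 i j (Relation.TransGen.single (Or.inr ⟨rfl, rfl⟩))
  · rintro ⟨hf, hfij⟩
    refine ⟨hf.1, ?_, ?_, hf.2.2.2⟩
    · intro a b hab
      rcases (addRel_char hr).mp hab with h | ⟨h1, h2⟩
      · exact hf.2.1 a b h
      · exact le_trans (hf.2.1 a i h1) (le_trans hfij (hf.2.1 j b h2))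
    · intro a b hab hba
      rcases (addRel_char hr).mp hab with h | ⟨h1, h2⟩
      · exact hf.2.2.1 a b h hba
      · rcases lt_or_ge (i : ℕ) (a : ℕ) with hia | hia
        · exact lt_of_lt_of_le (hf.2.2.1 a i h1 hia)
            (le_trans hfij (hf.2.1 j b h2))
        · rcases lt_or_ge (b : ℕ) (j : ℕ) with hbj | hbj
          · exact lt_of_le_of_lt (le_trans (hf.2.1 a i h1) hfij)
              (hf.2.2.1 j b h2 hbj)
          · omega
  
include hr in
lemma isRP_addRel₂ {i j : Fin p} (hij : ¬ r i j) (hji : ¬ r j i)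
    (hlt : (i : ℕ) < (j : ℕ)) {ρ : Fin p → ℤ} {f : Fin p → ℕ} :
    IsRP p (addRel p r j i) ρ f ↔ IsRP p r ρ f ∧ f j < f i := by
  haveI := hr
  constructor
  · intro h
    refine ⟨⟨h.1, ?_, ?_, h.2.2.2⟩, ?_⟩
    · exact fun a b hab => h.2.1 a b (Relation.TransGen.single (Or.inl hab))
    · exact fun a b hab => h.2.2.1 a b (Relation.TransGen.single (Or.inl hab))
    · exact h.2.2.1 j i (Relation.TransGen.single (Or.inr ⟨rfl, rfl⟩)) hlt
  · rintro ⟨hf, hfij⟩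
    refine ⟨hf.1, ?_, ?_, hf.2.2.2⟩
    · intro a b hab
      rcases (addRel_char hr).mp hab with h | ⟨h1, h2⟩
      · exact hf.2.1 a b h
      · exact le_trans (hf.2.1 a j h1)
          (le_trans (le_of_lt hfij) (hf.2.1 i b h2))
    · intro a b hab hba
      rcases (addRel_char hr).mp hab with h | ⟨h1, h2⟩
      · exact hf.2.2.1 a b h hba
      · exact lt_of_le_of_lt (hf.2.1 a j h1)
          (lt_of_lt_of_le hfij (hf.2.1 i b h2))

/-! ### finiteness of the partition set -/

lemma rp_finite (r' : Fin p → Fin p → Prop) (ρ : Fin p → ℤ) :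
    {f : Fin p → ℕ | IsRP p r' ρ f}.Finite := by
  apply finite_of_bounded_fin (M := Finset.univ.sup fun i => (ρ i).toNat)
  intro f hf i
  have h1 : (f i : ℤ) ≤ ρ i := hf.2.2.2 i
  have h2 : f i ≤ (ρ i).toNat := by omega
  exact le_trans h2 (Finset.le_sup (f := fun i => (ρ i).toNat) (Finset.mem_univ i))

include hr in
lemma genRP_split {i j : Fin p} (hij : ¬ r i j) (hji : ¬ r j i)
    (hlt : (i : ℕ) < (j : ℕ)) (ρ : Fin p → ℤ) :
    genRP p r ρ = genRP p (addRel p r i j) ρ + genRP p (addRel p r j i) ρ := by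
  unfold genRP
  have hset : {f : Fin p → ℕ | IsRP p r ρ f} =
      {f : Fin p → ℕ | IsRP p (addRel p r i j) ρ f} ∪
      {f : Fin p → ℕ | IsRP p (addRel p r j i) ρ f} := by
    ext f
    simp only [Set.mem_setOf_eq, Set.mem_union]
    rw [isRP_addRel₁ hr hij hji hlt, isRP_addRel₂ hr hij hji hlt]
    constructor
    · intro h
      rcases le_or_gt (f i) (f j) with h' | h'
      · exact Or.inl ⟨h, h'⟩
      · exact Or.inr ⟨h, h'⟩
    · rintro (⟨h, _⟩ | ⟨h, _⟩) <;> exact h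
  rw [hset]
  apply finsum_mem_union
  · rw [Set.disjoint_left]
    intro f h1 h2
    rw [Set.mem_setOf_eq, isRP_addRel₁ hr hij hji hlt] at h1
    rw [Set.mem_setOf_eq, isRP_addRel₂ hr hij hji hlt] at h2
    omega
  · exact rp_finite _ ρ
  · exact rp_finite _ ρ

/-! ### relation cardinality -/

noncomputable def relCard (p : ℕ) (r' : Fin p → Fin p → Prop) : ℕ :=
  Set.ncard {q : Fin p × Fin p | r' q.1 q.2}

lemma relCard_le (r' : Fin p → Fin p → Prop) : relCard p r' ≤ p * p := by
  have h := Set.ncard_le_ncard (Set.subset_univ {q : Fin p × Fin p | r' q.1 q.2})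
    Set.finite_univ
  rwa [Set.ncard_univ, Nat.card_eq_fintype_card, Fintype.card_prod,
    Fintype.card_fin] at h

include hr in
lemma relCard_lt {i j : Fin p} (hij : ¬ r i j) (hji : ¬ r j i) :
    relCard p r < relCard p (addRel p r i j) := by
  apply Set.ncard_lt_ncard
  · constructor
    · intro q hq
      exact Relation.TransGen.single (Or.inl hq)
    · intro hsub
      have hmem : ((i, j) : Fin p × Fin p) ∈ {q : Fin p × Fin p | addRel p r i j q.1 q.2} :=
        Relation.TransGen.single (Or.inr ⟨rfl, rfl⟩)
      exact hij (hsub hmem)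
  · exact Set.toFinite _

end Split


/-! ### enumeration of a partial order compatibly with a linear extension -/

theorem exists_enum {p : ℕ} (q : Fin p → Fin p → Prop) (hq : IsPartialOrder (Fin p) q) :
    ∃ e : Equiv.Perm (Fin p),
      ∀ a b : Fin p, q (e a) (e b) → e a ≠ e b → (a : ℕ) < (b : ℕ) := by
  classical
  haveI := hq
  obtain ⟨s, hs, hsub⟩ := extend_partialOrder q
  haveI := hs
  set rank : Fin p → ℕ := fun x => (Finset.univ.filter (fun y => s y x ∧ y ≠ x)).card
    with hrank
  have hrank_lt : ∀ x, rank x < p := by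
    intro x
    have hsub' : (Finset.univ.filter (fun y => s y x ∧ y ≠ x)) ⊆ Finset.univ.erase x := by
      intro y hy
      simp only [Finset.mem_filter, Finset.mem_erase, Finset.mem_univ, and_true] at hy ⊢
      exact hy.2.2
    have h1 := Finset.card_le_card hsub'
    rw [Finset.card_erase_of_mem (Finset.mem_univ x), Finset.card_univ,
      Fintype.card_fin] at h1
    have hp : 0 < p := x.pos
    show (Finset.univ.filter (fun y => s y x ∧ y ≠ x)).card < p
    omega
  have hmono : ∀ x y, s x y → x ≠ y → rank x < rank y := by
    intro x y hxy hne
    apply Finset.card_lt_card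
    constructor
    · intro z hz
      simp only [Finset.mem_filter, Finset.mem_univ, true_and] at hz ⊢
      refine ⟨trans_of s hz.1 hxy, ?_⟩
      intro hzy
      subst hzy
      exact hne (antisymm_of s hxy hz.1)
    · intro hcon
      have hx : x ∈ Finset.univ.filter (fun z => s z y ∧ z ≠ y) := by
        simp only [Finset.mem_filter, Finset.mem_univ, true_and]
        exact ⟨hxy, hne⟩
      have := hcon hx
      simp only [Finset.mem_filter, Finset.mem_univ, true_and] at this
      exact this.2 rfl
  set rankF : Fin p → Fin p := fun x => ⟨rank x, hrank_lt x⟩ with hrankF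
  have hinj : Function.Injective rankF := by
    intro x y hxy
    by_contra hne
    rcases total_of s x y with h | h
    · have := hmono x y h hne
      rw [hrankF] at hxy
      simp only [Fin.mk.injEq] at hxy
      omega
    · have := hmono y x h (Ne.symm hne)
      rw [hrankF] at hxy
      simp only [Fin.mk.injEq] at hxy
      omega
  have hbij : Function.Bijective rankF := Finite.injective_iff_bijective.mp hinj
  refine ⟨(Equiv.ofBijective rankF hbij).symm, ?_⟩
  intro a b hab hne
  have h1 : s (((Equiv.ofBijective rankF hbij).symm) a) (((Equiv.ofBijective rankF hbij).symm) b) :=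
    hsub _ _ hab
  have h2 := hmono _ _ h1 hne
  have h3 : rankF ((Equiv.ofBijective rankF hbij).symm a) = a :=
    (Equiv.ofBijective rankF hbij).apply_symm_apply a
  have h4 : rankF ((Equiv.ofBijective rankF hbij).symm b) = b :=
    (Equiv.ofBijective rankF hbij).apply_symm_apply b
  have h5 : rank ((Equiv.ofBijective rankF hbij).symm a) = (a : ℕ) :=
    congrArg Fin.val h3
  have h6 : rank ((Equiv.ofBijective rankF hbij).symm b) = (b : ℕ) :=
    congrArg Fin.val h4
  omega

/-! ### cover chains -/

section Covers

variable {p : ℕ} {r : Fin p → Fin p → Prop} (hr : IsPartialOrder (Fin p) r)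

include hr in
lemma exists_cover_chain {i j : Fin p} (hij : r i j) :
    ∃ (k : ℕ) (c : ℕ → Fin p), c 0 = i ∧ c k = j ∧
      ∀ s, s < k → Covers p r (c s) (c (s + 1)) := by
  haveI := hr
  classical
  suffices H : ∀ (n : ℕ) (i j : Fin p), r i j →
      Set.ncard {x | r i x ∧ r x j} ≤ n → ∃ (k : ℕ) (c : ℕ → Fin p), c 0 = i ∧ c k = j ∧
      ∀ s, s < k → Covers p r (c s) (c (s + 1)) by
    exact H (Set.ncard {x | r i x ∧ r x j}) i j hij (le_refl _)
  intro n
  induction n with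
  | zero =>
    intro i j hij hcard
    exfalso
    have hmem : i ∈ {x | r i x ∧ r x j} := ⟨refl_of r i, hij⟩
    have := Set.ncard_pos (Set.toFinite _) |>.mpr ⟨i, hmem⟩
    omega
  | succ n ih =>
    intro i j hij hcard
    by_cases heq : i = j
    · exact ⟨0, fun _ => i, rfl, by rw [heq], fun s hs => absurd hs (by omega)⟩
    by_cases hcov : ∀ k, r i k → r k j → k = i ∨ k = j
    · refine ⟨1, fun s => if s = 0 then i else j, by simp, by simp, ?_⟩
      intro s hs
      have hs0 : s = 0 := by omega
      subst hs0
      simp only [if_pos rfl, if_neg (by omega : ¬ (0 + 1 = 0))]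
      exact ⟨hij, heq, hcov⟩
    · push_neg at hcov
      obtain ⟨x, hix, hxj, hxi, hxj'⟩ := hcov
      have hx_sub : {z | r i z ∧ r z x} ⊂ {z | r i z ∧ r z j} := by
        have hsub : {z | r i z ∧ r z x} ⊆ {z | r i z ∧ r z j} := by
          intro z hz
          exact ⟨hz.1, trans_of r hz.2 hxj⟩
        rw [Set.ssubset_iff_of_subset hsub]
        exact ⟨j, ⟨hij, refl_of r j⟩, fun hmem => hxj' (antisymm_of r hxj hmem.2)⟩
      have hx_sub2 : {z | r x z ∧ r z j} ⊂ {z | r i z ∧ r z j} := by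
        have hsub : {z | r x z ∧ r z j} ⊆ {z | r i z ∧ r z j} := by
          intro z hz
          exact ⟨trans_of r hix hz.1, hz.2⟩
        rw [Set.ssubset_iff_of_subset hsub]
        exact ⟨i, ⟨refl_of r i, hij⟩, fun hmem => hxi (antisymm_of r hmem.1 hix)⟩
      have hc1 : Set.ncard {z | r i z ∧ r z x} ≤ n := by
        have := Set.ncard_lt_ncard hx_sub (Set.toFinite _)
        omega
      have hc2 : Set.ncard {z | r x z ∧ r z j} ≤ n := by
        have := Set.ncard_lt_ncard hx_sub2 (Set.toFinite _)
        omega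
      obtain ⟨k₁, c₁, hc₁0, hc₁k, hc₁cov⟩ := ih i x hix hc1
      obtain ⟨k₂, c₂, hc₂0, hc₂k, hc₂cov⟩ := ih x j hxj hc2
      have hk₁pos : k₁ ≠ 0 := by
        intro h0
        subst h0
        have : x = i := by rw [← hc₁k, hc₁0]
        exact hxi this
      refine ⟨k₁ + k₂, fun s => if s < k₁ then c₁ s else c₂ (s - k₁), ?_, ?_, ?_⟩
      · simp only [if_pos (show 0 < k₁ by omega)]
        exact hc₁0
      · simp only [if_neg (show ¬ (k₁ + k₂ < k₁) by omega)]
        rw [show k₁ + k₂ - k₁ = k₂ by omega]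
        exact hc₂k
      · intro s hs
        rcases lt_trichotomy (s + 1) k₁ with h | h | h
        · simp only [if_pos (show s < k₁ by omega), if_pos h]
          exact hc₁cov s (by omega)
        · simp only [if_pos (show s < k₁ by omega),
            if_neg (show ¬ (s + 1 < k₁) by omega)]
          rw [show s + 1 - k₁ = 0 by omega, hc₂0, ← hc₁k, ← h]
          exact hc₁cov s (by omega)
        · simp only [if_neg (show ¬ (s < k₁) by omega),
            if_neg (show ¬ (s + 1 < k₁) by omega)]
          rw [show s + 1 - k₁ = (s - k₁) + 1 by omega]
          exact hc₂cov (s - k₁) (by omega)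

include hr in
lemma isRP_iff_covers {ρ : Fin p → ℤ} {f : Fin p → ℕ} :
    IsRP p r ρ f ↔ ((∀ i, 1 ≤ f i) ∧ (∀ i, (f i : ℤ) ≤ ρ i) ∧
      ∀ i j, Covers p r i j → f i ≤ f j ∧ ((j : ℕ) < (i : ℕ) → f i < f j)) := by
  constructor
  · intro h
    exact ⟨h.1, h.2.2.2, fun i j hc =>
      ⟨h.2.1 i j hc.1, fun hlt => h.2.2.1 i j hc.1 hlt⟩⟩
  · rintro ⟨h1, h2, h3⟩
    refine ⟨h1, ?_, ?_, h2⟩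
    · intro i j hij
      obtain ⟨k, c, hc0, hck, hcov⟩ := exists_cover_chain hr hij
      have : f (c 0) ≤ f (c k) :=
        le_of_steps (g := fun s => f (c s)) (Nat.zero_le k)
          (fun u _ hu' => (h3 _ _ (hcov u hu')).1)
      rwa [hc0, hck] at this
    · intro i j hij hlt
      obtain ⟨k, c, hc0, hck, hcov⟩ := exists_cover_chain hr hij
      have hL : ((c k : Fin p) : ℕ) < ((c 0 : Fin p) : ℕ) := by
        rw [hc0, hck]; exact hlt
      obtain ⟨u, hu0, hu, hdsc⟩ := exists_dsc (W := fun s => ((c s : Fin p) : ℕ))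
        (Nat.zero_le k) hL
      have e1 : f (c 0) ≤ f (c u) :=
        le_of_steps (g := fun s => f (c s)) hu0
          (fun v _ hv' => (h3 _ _ (hcov v (by omega))).1)
      have e2 : f (c u) < f (c (u + 1)) := (h3 _ _ (hcov u hu)).2 hdsc
      have e3 : f (c (u + 1)) ≤ f (c k) :=
        le_of_steps (g := fun s => f (c s)) (show u + 1 ≤ k by omega)
          (fun v _ hv' => (h3 _ _ (hcov v (by omega))).1)
      rw [hc0, hck] at *
      omega

end Covers


/-! ### relabelling a flagged poset to a well-labelled one -/

lemma transGen_lift {α : Type*} {E : α → α → Prop} (φ : α → ℤ) (ψ : α → ℕ)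
    (h : ∀ a b, E a b → φ b < φ a ∨ (φ b = φ a ∧ ψ a < ψ b)) :
    ∀ a b, Relation.TransGen E a b → φ b < φ a ∨ (φ b = φ a ∧ ψ a < ψ b) := by
  intro a b hab
  induction hab with
  | single hE => exact h _ _ hE
  | tail hab hE ih =>
    have h2 := h _ _ hE
    rcases ih with h1 | h1 <;> rcases h2 with h2 | h2
    · left; omega
    · left; omega
    · left; omega
    · right; omega

/-- the relation forcing the new labels -/
abbrev Erel (p : ℕ) (r : Fin p → Fin p → Prop) (ρ : Fin p → ℤ) :
    Fin p → Fin p → Prop := fun x y =>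
  ((Covers p r x y ∨ Covers p r y x) ∧ (x : ℕ) < (y : ℕ)) ∨
    (¬ r x y ∧ ¬ r y x ∧ ρ y < ρ x)

lemma covers_comp {p : ℕ} {r : Fin p → Fin p → Prop} (e : Equiv.Perm (Fin p))
    (a b : Fin p) :
    Covers p (fun x y => r (e x) (e y)) a b ↔ Covers p r (e a) (e b) := by
  constructor
  · rintro ⟨h1, h2, h3⟩
    refine ⟨h1, fun hcon => h2 (e.injective hcon), ?_⟩
    intro k hk1 hk2
    have h4 := h3 (e.symm k)
      (by show r (e a) (e (e.symm k)); rw [e.apply_symm_apply]; exact hk1)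
      (by show r (e (e.symm k)) (e b); rw [e.apply_symm_apply]; exact hk2)
    rcases h4 with h | h
    · left; rw [← e.apply_symm_apply k, h]
    · right; rw [← e.apply_symm_apply k, h]
  · rintro ⟨h1, h2, h3⟩
    refine ⟨h1, fun hcon => h2 (congrArg e hcon), ?_⟩
    intro k hk1 hk2
    rcases h3 (e k) hk1 hk2 with h | h
    · left; exact e.injective h
    · right; exact e.injective h

theorem exists_relabel {p : ℕ} {r : Fin p → Fin p → Prop}
    (hr : IsPartialOrder (Fin p) r) {ρ : Fin p → ℤ} (hflag : IsFlag p r ρ) :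
    ∃ (r' : Fin p → Fin p → Prop) (ρ' : Fin p → ℤ),
      IsPartialOrder (Fin p) r' ∧ WellLabelled p r' ρ' ∧
        genRP p r ρ = genRP p r' ρ' := by
  haveI := hr
  have hEprop : ∀ x y, Erel p r ρ x y →
      ρ y < ρ x ∨ (ρ y = ρ x ∧ (x : ℕ) < (y : ℕ)) := by
    intro x y hxy
    rcases hxy with ⟨hcov, hlt⟩ | ⟨h1, h2, h3⟩
    · rcases hcov with hc | hc
      · exact Or.inr ⟨((hflag.2 x y hc).1 hlt).symm, hlt⟩
      · rcases lt_or_eq_of_le ((hflag.2 y x hc).2 hlt) with h | h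
        · exact Or.inl h
        · exact Or.inr ⟨h, hlt⟩
    · exact Or.inl h3
  have htirr : Irreflexive (Relation.TransGen (Erel p r ρ)) := by
    intro a ha
    have := transGen_lift ρ (fun x => (x : ℕ)) hEprop a a ha
    omega
  have hqpo : IsPartialOrder (Fin p)
      (fun a b => Relation.TransGen (Erel p r ρ) a b ∨ a = b) := by
    refine { refl := fun a => Or.inr rfl, trans := ?_, antisymm := ?_ }
    · rintro a b c (hab | rfl) (hbc | rfl)
      · exact Or.inl (hab.trans hbc)
      · exact Or.inl hab
      · exact Or.inl hbc
      · exact Or.inr rfl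
    · rintro a b (hab | hab) (hba | hba)
      · exact absurd (hab.trans hba) (htirr a)
      · exact hba.symm
      · exact hab
      · exact hab
  obtain ⟨e, he⟩ := exists_enum _ hqpo
  have hkey : ∀ a b : Fin p, Erel p r ρ (e a) (e b) → (a : ℕ) < (b : ℕ) := by
    intro a b hE'
    have hne : e a ≠ e b := by
      intro hcon
      have := hEprop _ _ hE'
      rw [hcon] at this
      omega
    exact he a b (Or.inl (Relation.TransGen.single hE')) hne
  have horie : ∀ a b : Fin p, Covers p r (e a) (e b) →
      ((a : ℕ) < (b : ℕ) ↔ ((e a : ℕ) < (e b : ℕ))) := by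
    intro a b hc
    have hne : e a ≠ e b := hc.2.1
    have hnev : (e a : ℕ) ≠ (e b : ℕ) := fun hv => hne (Fin.val_injective hv)
    constructor
    · intro h
      by_contra h2
      have hlt : (e b : ℕ) < (e a : ℕ) := by omega
      have := hkey b a (Or.inl ⟨Or.inr hc, hlt⟩)
      omega
    · intro h
      exact hkey a b (Or.inl ⟨Or.inl hc, h⟩)
  have hr'po : IsPartialOrder (Fin p) (fun a b => r (e a) (e b)) :=
    { refl := fun a => refl_of r _,
      trans := fun a b c h1 h2 => trans_of r h1 h2,
      antisymm := fun a b h1 h2 => e.injective (antisymm_of r h1 h2) }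
  refine ⟨fun a b => r (e a) (e b), fun a => ρ (e a), hr'po, ⟨?_, ?_⟩, ?_⟩
  · -- well-labelled, covers
    intro a b hcab
    have hc := (covers_comp e a b).mp hcab
    have hne : e a ≠ e b := hc.2.1
    have hnev : (e a : ℕ) ≠ (e b : ℕ) := fun hv => hne (Fin.val_injective hv)
    constructor
    · intro hab
      exact le_of_eq ((hflag.2 (e a) (e b) hc).1 ((horie a b hc).mp hab)).symm
    · intro hba
      have h4 : ¬ ((e a : ℕ) < (e b : ℕ)) := by
        intro hcon
        have := (horie a b hc).mpr hcon
        omega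
      exact (hflag.2 (e a) (e b) hc).2 (by omega)
  · -- well-labelled, incomparables
    intro a b h1 h2 hab
    by_contra hcon
    push_neg at hcon
    have := hkey b a (Or.inr ⟨h2, h1, hcon⟩)
    omega
  · -- generating functions agree
    unfold genRP
    apply finsum_mem_eq_of_bijOn (fun f => f ∘ ⇑e)
    · refine ⟨?_, ?_, ?_⟩
      · -- maps to
        intro f hf
        rw [Set.mem_setOf_eq] at hf ⊢
        have h := (isRP_iff_covers hr).mp hf
        apply (isRP_iff_covers hr'po).mpr
        refine ⟨fun i => h.1 (e i), fun i => h.2.1 (e i), ?_⟩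
        intro a b hcab
        have hc : Covers p r (e a) (e b) := (covers_comp e a b).mp hcab
        have h3 := h.2.2 _ _ hc
        refine ⟨h3.1, ?_⟩
        intro hba
        apply h3.2
        have hne : e a ≠ e b := hc.2.1
        have hnev : (e a : ℕ) ≠ (e b : ℕ) := fun hv => hne (Fin.val_injective hv)
        have h4 : ¬ ((e a : ℕ) < (e b : ℕ)) := by
          intro hcon
          have := (horie a b hc).mpr hcon
          omega
        omega
      · -- inj on
        intro f1 _ f2 _ heq
        funext i
        have := congrFun heq (e.symm i)
        simpa [Function.comp, e.apply_symm_apply] using this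
      · -- surj on
        intro g hg
        rw [Set.mem_setOf_eq] at hg
        refine ⟨g ∘ ⇑e.symm, ?_, ?_⟩
        · rw [Set.mem_setOf_eq]
          have h := (isRP_iff_covers hr'po).mp hg
          apply (isRP_iff_covers hr).mpr
          refine ⟨fun i => h.1 (e.symm i), ?_, ?_⟩
          · intro i
            have h2 := h.2.1 (e.symm i)
            simpa [e.apply_symm_apply] using h2
          · intro i j hcij
            have hc2 : Covers p r (e (e.symm i)) (e (e.symm j)) := by
              rw [e.apply_symm_apply, e.apply_symm_apply]
              exact hcij
            have hc' : Covers p (fun x y => r (e x) (e y)) (e.symm i) (e.symm j) :=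
              (covers_comp e _ _).mpr hc2
            have h3 := h.2.2 _ _ hc'
            refine ⟨h3.1, ?_⟩
            intro hji
            apply h3.2
            have hne : e.symm i ≠ e.symm j := hc'.2.1
            have hnev : ((e.symm i : Fin p) : ℕ) ≠ ((e.symm j : Fin p) : ℕ) :=
              fun hv => hne (Fin.val_injective hv)
            have h4 : ¬ (((e.symm i : Fin p) : ℕ) < ((e.symm j : Fin p) : ℕ)) := by
              intro hcon
              have := (horie (e.symm i) (e.symm j) hc2).mp hcon
              rw [e.apply_symm_apply, e.apply_symm_apply] at this
              omega
            omega
        · funext i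
          simp [Function.comp, e.symm_apply_apply]
    · -- values agree
      intro f _
      exact (Equiv.prod_comp e (fun i => (X (f i) : MvPolynomial ℕ ℤ))).symm


/-! ### the base case: total orders -/

lemma Bslide_zero : Bslide 0 (fun _ => 0) = {fun _ => 0} := by
  ext b
  simp only [Set.mem_singleton_iff]
  constructor
  · rintro ⟨hs, _, _, _⟩
    funext m
    exact hs m (Nat.zero_le m)
  · intro h
    subst h
    refine ⟨fun m _ => rfl, fun k => le_refl _, rfl, ?_⟩
    intro k hk
    exact ⟨0, le_refl 0, by simp⟩

lemma decomp_one : Decomp 1 := by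
  refine ⟨0, {fun _ => 0}, fun _ => 1, ?_, ?_⟩
  · intro a ha m hm
    rw [Finset.mem_singleton] at ha
    subst ha
    rfl
  · rw [Finset.sum_singleton, slide_eq, Bslide_zero, finsum_mem_singleton]
    simp

lemma genRP_of_zero (r : Fin 0 → Fin 0 → Prop) (ρ : Fin 0 → ℤ) : genRP 0 r ρ = 1 := by
  unfold genRP
  have hset : {f : Fin 0 → ℕ | IsRP 0 r ρ f} = {fun i => i.elim0} := by
    ext f
    simp only [Set.mem_setOf_eq, Set.mem_singleton_iff]
    constructor
    · intro _
      funext i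
      exact i.elim0
    · intro h
      exact ⟨fun i => i.elim0, fun i => i.elim0, fun i => i.elim0, fun i => i.elim0⟩
  rw [hset, finsum_mem_singleton]
  simp

/-! ### positional data from an enumeration -/

def EfinD (p : ℕ) (hp : 0 < p) (e : Equiv.Perm (Fin p)) (s : ℕ) : Fin p :=
  if h : s < p then e ⟨s, h⟩ else e ⟨0, hp⟩

def WD (p : ℕ) (hp : 0 < p) (e : Equiv.Perm (Fin p)) (s : ℕ) : ℕ :=
  (EfinD p hp e s : ℕ)

def RnD (p : ℕ) (hp : 0 < p) (e : Equiv.Perm (Fin p)) (ρ : Fin p → ℤ) (s : ℕ) : ℕ :=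
  if s < p then (ρ (EfinD p hp e s)).toNat else 0

lemma EfinD_pos {p : ℕ} (hp : 0 < p) (e : Equiv.Perm (Fin p)) {s : ℕ} (hs : s < p) :
    EfinD p hp e s = e ⟨s, hs⟩ := dif_pos hs

lemma RnD_pos {p : ℕ} (hp : 0 < p) (e : Equiv.Perm (Fin p)) (ρ : Fin p → ℤ)
    {s : ℕ} (hs : s < p) : RnD p hp e ρ s = (ρ (e ⟨s, hs⟩)).toNat := by
  unfold RnD
  rw [if_pos hs, EfinD_pos hp e hs]

theorem decomp_total {p : ℕ} {r r₀ : Fin p → Fin p → Prop}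
    (hr : IsPartialOrder (Fin p) r) (htot : ∀ a b : Fin p, r a b ∨ r b a)
    (hr₀ : IsPartialOrder (Fin p) r₀) (hext : ∀ a b, r₀ a b → r a b)
    {ρ : Fin p → ℤ} (hwl : WellLabelled p r₀ ρ) : Decomp (genRP p r ρ) := by
  haveI := hr
  rcases Nat.eq_zero_or_pos p with hp0 | hp
  · subst hp0
    exact decomp_congr (genRP_of_zero r ρ) decomp_one
  obtain ⟨e, he⟩ := exists_enum r hr
  have hfwd : ∀ a b : Fin p, (a : ℕ) ≤ (b : ℕ) → r (e a) (e b) := by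
    intro a b hab
    rcases Nat.eq_or_lt_of_le hab with h | h
    · have hab' : a = b := Fin.val_injective h
      subst hab'
      exact refl_of r _
    · rcases htot (e a) (e b) with h' | h'
      · exact h'
      · by_cases heq : e b = e a
        · rw [heq]
          exact refl_of r _
        · have := he b a h' heq
          omega
  have hbwd : ∀ a b : Fin p, r (e a) (e b) → (a : ℕ) ≤ (b : ℕ) := by
    intro a b hab
    by_contra hcon
    push_neg at hcon
    have h' : r (e b) (e a) := hfwd b a (le_of_lt hcon)
    have : e a = e b := antisymm_of r hab h'
    have : a = b := e.injective this
    subst this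
    omega
  -- the positional data
  set W := WD p hp e with hWdef
  set Rn := RnD p hp e ρ with hRndef
  have hW : ∀ (s : ℕ) (hs : s < p), W s = ((e ⟨s, hs⟩ : Fin p) : ℕ) := by
    intro s hs
    rw [hWdef]
    unfold WD
    rw [EfinD_pos hp e hs]
  -- HW property
  have hw : ∀ s, s + 1 < p → ¬ Dsc W s → Rn (s + 1) ≤ Rn s := by
    intro s hs hd
    have h1 : s < p := by omega
    have huv : e ⟨s, h1⟩ ≠ e ⟨s + 1, hs⟩ := by
      intro hcon
      have := e.injective hcon
      rw [Fin.mk.injEq] at this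
      omega
    have hvals : ((e ⟨s, h1⟩ : Fin p) : ℕ) < ((e ⟨s + 1, hs⟩ : Fin p) : ℕ) := by
      unfold Dsc at hd
      rw [hW s h1, hW (s + 1) hs] at hd
      have : ((e ⟨s, h1⟩ : Fin p) : ℕ) ≠ ((e ⟨s + 1, hs⟩ : Fin p) : ℕ) :=
        fun hv => huv (Fin.val_injective hv)
      omega
    have hrhole : ρ (e ⟨s + 1, hs⟩) ≤ ρ (e ⟨s, h1⟩) := by
      by_cases hr0uv : r₀ (e ⟨s, h1⟩) (e ⟨s + 1, hs⟩)
      · -- this is a cover of r₀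
        have hcov : Covers p r₀ (e ⟨s, h1⟩) (e ⟨s + 1, hs⟩) := by
          refine ⟨hr0uv, huv, ?_⟩
          intro k hk1 hk2
          have hk1' : r (e ⟨s, h1⟩) (e (e.symm k)) := by
            rw [e.apply_symm_apply]
            exact hext _ _ hk1
          have hk2' : r (e (e.symm k)) (e ⟨s + 1, hs⟩) := by
            rw [e.apply_symm_apply]
            exact hext _ _ hk2
          have hs1 := hbwd _ _ hk1'
          have hs2 := hbwd _ _ hk2'
          simp only [] at hs1 hs2
          rcases Nat.eq_or_lt_of_le hs1 with h | h
          · left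
            rw [← e.apply_symm_apply k]
            congr 1
            exact (Fin.val_injective h.symm)
          · right
            rw [← e.apply_symm_apply k]
            congr 1
            apply Fin.val_injective
            simp only []
            omega
        exact (hwl.1 _ _ hcov).1 hvals
      · by_cases hr0vu : r₀ (e ⟨s + 1, hs⟩) (e ⟨s, h1⟩)
        · exfalso
          have hruv : r (e ⟨s, h1⟩) (e ⟨s + 1, hs⟩) :=
            hfwd ⟨s, h1⟩ ⟨s + 1, hs⟩ (by simp)
          exact huv (antisymm_of r hruv (hext _ _ hr0vu))
        · exact hwl.2 _ _ hr0uv hr0vu hvals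
    rw [hRndef, RnD_pos hp e ρ hs, RnD_pos hp e ρ h1]
    exact Int.toNat_le_toNat hrhole
  -- the transfer bijection
  have htrans : genRP p r ρ = genN p W Rn := by
    unfold genRP genN
    apply finsum_mem_eq_of_bijOn
      (fun f s => if h : s < p then f (e ⟨s, h⟩) else 0)
    · refine ⟨?_, ?_, ?_⟩
      · -- maps to
        intro f hf
        rw [Set.mem_setOf_eq] at hf
        refine ⟨?_, ?_, ?_⟩
        · intro s hs
          dsimp only
          rw [dif_pos hs, hRndef, RnD_pos hp e ρ hs]
          refine ⟨hf.1 _, ?_⟩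
          have h1 := hf.2.2.2 (e ⟨s, hs⟩)
          have h2 := hf.1 (e ⟨s, hs⟩)
          omega
        · intro s hs
          have h1 : s < p := by omega
          dsimp only
          rw [dif_pos h1, dif_pos hs]
          constructor
          · exact hf.2.1 _ _ (hfwd ⟨s, h1⟩ ⟨s + 1, hs⟩ (by simp))
          · intro hdsc
            unfold Dsc at hdsc
            rw [hW s h1, hW (s + 1) hs] at hdsc
            exact hf.2.2.1 _ _ (hfwd ⟨s, h1⟩ ⟨s + 1, hs⟩ (by simp)) hdsc
        · intro s hs
          dsimp only
          rw [dif_neg (by omega)]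
      · -- inj on
        intro f1 _ f2 _ heq
        funext i
        have h1 : ((e.symm i : Fin p) : ℕ) < p := (e.symm i).isLt
        have := congrFun heq ((e.symm i : Fin p) : ℕ)
        dsimp only at this
        rw [dif_pos h1, dif_pos h1] at this
        rw [Fin.eta, e.apply_symm_apply] at this
        exact this
      · -- surj on
        intro g hg
        refine ⟨fun i => g ((e.symm i : Fin p) : ℕ), ?_, ?_⟩
        · rw [Set.mem_setOf_eq]
          refine ⟨?_, ?_, ?_, ?_⟩
          · intro i
            exact (hg.1 _ (e.symm i).isLt).1
          · -- monotone
            intro i j hij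
            have hij' : r (e (e.symm i)) (e (e.symm j)) := by
              rw [e.apply_symm_apply, e.apply_symm_apply]
              exact hij
            have hle := hbwd _ _ hij'
            exact PartN_mono hg hle (e.symm j).isLt
          · -- strict
            intro i j hij hji
            dsimp only
            have hij' : r (e (e.symm i)) (e (e.symm j)) := by
              rw [e.apply_symm_apply, e.apply_symm_apply]
              exact hij
            have hle := hbwd _ _ hij'
            have hne : ((e.symm i : Fin p) : ℕ) ≠ ((e.symm j : Fin p) : ℕ) := by
              intro hv
              have : e.symm i = e.symm j := Fin.val_injective hv
              have : i = j := by
                rw [← e.apply_symm_apply i, ← e.apply_symm_apply j, this]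
              omega
            have hlt : ((e.symm i : Fin p) : ℕ) < ((e.symm j : Fin p) : ℕ) := by omega
            have hWi : W ((e.symm i : Fin p) : ℕ) = (i : ℕ) := by
              rw [hW _ (e.symm i).isLt, Fin.eta, e.apply_symm_apply]
            have hWj : W ((e.symm j : Fin p) : ℕ) = (j : ℕ) := by
              rw [hW _ (e.symm j).isLt, Fin.eta, e.apply_symm_apply]
            obtain ⟨u, hu0, hu, hdsc⟩ := exists_dsc (W := W) (le_of_lt hlt)
              (by rw [hWi, hWj]; exact hji)
            have e1 : g ((e.symm i : Fin p) : ℕ) ≤ g u :=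
              PartN_mono hg hu0 (by have := (e.symm j).isLt; omega)
            have e2 : g u < g (u + 1) := (hg.2.1 u
              (by have := (e.symm j).isLt; omega)).2 hdsc
            have e3 : g (u + 1) ≤ g ((e.symm j : Fin p) : ℕ) :=
              PartN_mono hg (by omega) (e.symm j).isLt
            omega
          · -- bounds
            intro i
            dsimp only
            have h1 := (hg.1 _ (e.symm i).isLt).2
            have h2 := (hg.1 _ (e.symm i).isLt).1
            rw [hRndef, RnD_pos hp e ρ (e.symm i).isLt, Fin.eta,
              e.apply_symm_apply] at h1
            omega
        · funext s
          dsimp only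
          rcases lt_or_ge s p with hs | hs
          · rw [dif_pos hs, e.symm_apply_apply]
          · rw [dif_neg (by omega), hg.2.2 s hs]
    · -- values
      intro f _
      dsimp only
      symm
      apply Finset.prod_bij (fun s hs => e ⟨s, Finset.mem_range.mp hs⟩)
      · intro a ha
        exact Finset.mem_univ _
      · intro a ha b hb hab
        have := e.injective hab
        rw [Fin.mk.injEq] at this
        exact this
      · intro b _
        refine ⟨((e.symm b : Fin p) : ℕ), Finset.mem_range.mpr (e.symm b).isLt, ?_⟩
        rw [Fin.eta, e.apply_symm_apply]
      · intro s hs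
        rw [dif_pos (Finset.mem_range.mp hs)]
  rw [htrans]
  exact decomp_genN hp hw


/-! ### main assembly -/

theorem decomp_aux {p : ℕ} {r₀ : Fin p → Fin p → Prop} (hr₀ : IsPartialOrder (Fin p) r₀)
    {ρ : Fin p → ℤ} (hwl : WellLabelled p r₀ ρ) :
    ∀ (m : ℕ) (r : Fin p → Fin p → Prop), IsPartialOrder (Fin p) r →
      (∀ a b, r₀ a b → r a b) → p * p ≤ relCard p r + m → Decomp (genRP p r ρ) := by
  intro m
  induction m with
  | zero =>
    intro r hr hext hcard
    by_cases htot : ∀ a b : Fin p, r a b ∨ r b a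
    · exact decomp_total hr htot hr₀ hext hwl
    · exfalso
      push_neg at htot
      obtain ⟨i, j, hij, hji⟩ := htot
      have h1 := relCard_lt hr hij hji
      have h2 := relCard_le (p := p) (addRel p r i j)
      omega
  | succ m ih =>
    intro r hr hext hcard
    by_cases htot : ∀ a b : Fin p, r a b ∨ r b a
    · exact decomp_total hr htot hr₀ hext hwl
    · push_neg at htot
      obtain ⟨i, j, hij, hji⟩ := htot
      have hne : i ≠ j := fun h => hij (h ▸ refl_of r i)
      have hnev : (i : ℕ) ≠ (j : ℕ) := fun h => hne (Fin.val_injective h)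
      have hcard1 := relCard_lt hr hij hji
      have hcard2 := relCard_lt hr hji hij
      rcases lt_or_gt_of_ne hnev with hlt | hlt
      · rw [genRP_split hr hij hji hlt ρ]
        apply decomp_add
        · exact ih (addRel p r i j) (addRel_po hr hij hji)
            (fun a b h => Relation.TransGen.single (Or.inl (hext a b h)))
            (by omega)
        · exact ih (addRel p r j i) (addRel_po hr hji hij)
            (fun a b h => Relation.TransGen.single (Or.inl (hext a b h)))
            (by omega)
      · rw [genRP_split hr hji hij hlt ρ]
        apply decomp_add
        · exact ih (addRel p r j i) (addRel_po hr hji hij)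
            (fun a b h => Relation.TransGen.single (Or.inl (hext a b h)))
            (by omega)
        · exact ih (addRel p r i j) (addRel_po hr hij hji)
            (fun a b h => Relation.TransGen.single (Or.inl (hext a b h)))
            (by omega)

theorem decomp_main {p : ℕ} (r : Fin p → Fin p → Prop) (hr : IsPartialOrder (Fin p) r)
    (ρ : Fin p → ℤ) (hflag : IsFlag p r ρ) : Decomp (genRP p r ρ) := by
  obtain ⟨r', ρ', hr', hwl', heq⟩ := exists_relabel hr hflag
  rw [heq]
  exact decomp_aux hr' hwl' (p * p) r' hr' (fun a b h => h) (by omega)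

end Stmt12

theorem stmt12 (p : ℕ) (r : Fin p → Fin p → Prop) [IsPartialOrder (Fin p) r]
    (ρ : Fin p → ℤ) (hflag : IsFlag p r ρ) :
    ∃ (n : ℕ) (S : Finset (ℕ → ℕ)) (c : (ℕ → ℕ) → ℕ),
      (∀ a ∈ S, ∀ m, n ≤ m → a m = 0) ∧
      genRP p r ρ = ∑ a ∈ S, (c a : ℤ) • slide n a := by
  obtain ⟨n, S, c, h1, h2⟩ := Stmt12.decomp_main r inferInstance ρ hflag
  exact ⟨n, S, c, h1, h2⟩
end

section
/- If a is a weak composition of length n such that a_j > 0 whenever there exists i < j with a_i > 0 (i.e., the nonzero entries of a occupy a final segment), then the fundamental slide polynomial 𝔉_a equals the fundamental quasisymmetric polynomial F_{flat(a)}(x₁,…,x_n). -/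
open MvPolynomial Finset

lemma aux_dom (n : ℕ) (a : ℕ → ℕ) (ha : ∀ m, n ≤ m → a m = 0)
    (hfinal : ∀ j, j < n → (∃ i, i < j ∧ 0 < a i) → 0 < a j)
    (b : ℕ → ℕ) (hb0 : ∀ m, n ≤ m → b m = 0) (hr : FlatRefines n b a) :
    Dominates b a := by
  have Bmono : ∀ {s t : ℕ}, s ≤ t → ∑ m ∈ Finset.range s, b m ≤ ∑ m ∈ Finset.range t, b m := by
    intro s t hst
    exact Finset.sum_le_sum_of_subset (Finset.range_subset_range.2 hst)
  intro k
  rcases le_or_gt n k with hk | hk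
  · have hA : ∑ m ∈ Finset.range k, a m = ∑ m ∈ Finset.range n, a m := by
      symm
      apply Finset.sum_subset (Finset.range_subset_range.2 hk)
      intro m _ hm
      exact ha m (le_of_not_gt (fun h => hm (Finset.mem_range.2 h)))
    have hB : ∑ m ∈ Finset.range k, b m = ∑ m ∈ Finset.range n, b m := by
      symm
      apply Finset.sum_subset (Finset.range_subset_range.2 hk)
      intro m _ hm
      exact hb0 m (le_of_not_gt (fun h => hm (Finset.mem_range.2 h)))
    rw [hA, hB, hr.1]
  · -- k < n
    by_cases hzero : ∀ i, i < k → a i = 0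
    · have : ∑ m ∈ Finset.range k, a m = 0 :=
        Finset.sum_eq_zero (fun m hm => hzero m (Finset.mem_range.1 hm))
      omega
    · push_neg at hzero
      obtain ⟨i, hik, hai⟩ := hzero
      have hpos : ∀ m, k ≤ m → m < n → 0 < a m := by
        intro m hkm hmn
        exact hfinal m hmn ⟨i, lt_of_lt_of_le hik hkm, Nat.pos_of_ne_zero hai⟩
      have Astrict : ∀ j, k ≤ j → j < n →
          ∑ m ∈ Finset.range j, a m < ∑ m ∈ Finset.range (j+1), a m := by
        intro j hkj hjn
        rw [Finset.sum_range_succ]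
        have := hpos j hkj hjn
        omega
      have key : ∀ d, d ≤ n - k → ∃ k', k' ≤ n - d ∧
          ∑ m ∈ Finset.range k', b m = ∑ m ∈ Finset.range (n - d), a m := by
        intro d
        induction d with
        | zero =>
          intro _
          obtain ⟨k', hk'n, hk'⟩ := hr.2 n le_rfl
          exact ⟨k', by simpa using hk'n, by simpa using hk'⟩
        | succ d ih =>
          intro hd
          obtain ⟨k', hk'le, hk'⟩ := ih (by omega)
          obtain ⟨k'', hk''n, hk''⟩ := hr.2 (n - (d+1)) (by omega)
          refine ⟨k'', ?_, hk''⟩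
          have hAlt : ∑ m ∈ Finset.range (n - (d+1)), a m < ∑ m ∈ Finset.range (n - d), a m := by
            have := Astrict (n - (d+1)) (by omega) (by omega)
            have he : n - (d+1) + 1 = n - d := by omega
            rwa [he] at this
          have hBlt : ∑ m ∈ Finset.range k'', b m < ∑ m ∈ Finset.range k', b m := by
            rw [hk'', hk']; exact hAlt
          have : k'' < k' := by
            by_contra h
            exact absurd (Bmono (le_of_not_gt h)) (not_le.2 hBlt)
          omega
      obtain ⟨k', hk'le, hk'⟩ := key (n - k) (le_refl _)
      have hnk : n - (n - k) = k := by omega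
      rw [hnk] at hk'le hk'
      calc ∑ m ∈ Finset.range k, a m = ∑ m ∈ Finset.range k', b m := hk'.symm
        _ ≤ ∑ m ∈ Finset.range k, b m := Bmono hk'le

theorem stmt19 (n : ℕ) (a : ℕ → ℕ) (ha : ∀ m, n ≤ m → a m = 0)
    (hfinal : ∀ j, j < n → (∃ i, i < j ∧ 0 < a i) → 0 < a j) :
    slide n a = fundQS n a := by
  unfold slide fundQS
  have hset : {b : ℕ → ℕ | (∀ m, n ≤ m → b m = 0) ∧ Dominates b a ∧ FlatRefines n b a}
      = {b : ℕ → ℕ | (∀ m, n ≤ m → b m = 0) ∧ FlatRefines n b a} := by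
    ext b
    simp only [Set.mem_setOf_eq]
    constructor
    · rintro ⟨h0, _, hr⟩; exact ⟨h0, hr⟩
    · rintro ⟨h0, hr⟩; exact ⟨h0, aux_dom n a ha hfinal b h0 hr, hr⟩
  rw [hset]
end
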